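/- With ℓ_N positive integers satisfying ℓ_N → ∞ and ℓ_N/N → 0, and ℰ^i_N = E_N ∩ [b_i − ℓ_N/N, b_i + ℓ_N/N], Δ_N = E_N ∖ ∪_{i=1}^κ ℰ^i_N, one has lim_{N→∞} ν_N(Δ_N) = 0 and, for every 1 ≤ i ≤ κ, lim_{N→∞} ν_N(ℰ^i_N) = m(b_i)/Σ_{j=1}^κ m(b_j). -/

import Mathlib

open scoped Classical
open Filter Topology

noncomputable section

/-- The weight of the discrete-time path `γ` (consisting of `n` steps) under the transition
kernel `p`: the probability that the chain started at `γ 0` follows exactly this path. -/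
def pathWeight {E : Type*} (p : E → E → ℝ) {n : ℕ} (γ : Fin (n + 1) → E) : ℝ :=
  ∏ i : Fin n, p (γ i.castSucc) (γ i.succ)

/-- `retProb p η S T` is the probability that the chain with transition kernel `p` started at
`η` enters the set `S` at some positive time, and does so for the first time at a state
belonging to `T`.  For `T ⊆ S` this is `P_η[ℍ⁺_S < ∞ and Y_{ℍ⁺_S} ∈ T]`; for disjoint sets
`A`, `B`, taking `S = A ∪ B`, `T = B` gives `P_η[ℍ⁺_B < ℍ⁺_A]`. -/
def retProb {E : Type*} (p : E → E → ℝ) (η : E) (S T : Set E) : ℝ :=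
  ∑' x : Σ n : ℕ, Fin (n + 2) → E,
    if x.2 0 = η ∧ (∀ j : Fin (x.1 + 2), 0 < (j : ℕ) → (j : ℕ) < x.1 + 1 → x.2 j ∉ S) ∧
        x.2 (Fin.last (x.1 + 1)) ∈ T
      then pathWeight p x.2 else 0

/-- `hitProb p η A B = P_η[ℍ_A < ℍ_B]`: the probability that the chain with kernel `p`
started at `η` hits `A` (a hit at time `0` being allowed) strictly before hitting `B`. -/
def hitProb {E : Type*} (p : E → E → ℝ) (η : E) (A B : Set E) : ℝ :=
  ∑' x : Σ n : ℕ, Fin (n + 1) → E,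
    if x.2 0 = η ∧ (∀ j : Fin (x.1 + 1), (j : ℕ) < x.1 → x.2 j ∉ A ∪ B) ∧
        x.2 (Fin.last x.1) ∈ A
      then pathWeight p x.2 else 0

/-- `y` is the neighbor immediately above `x` in the finite set `s ⊆ ℝ`. -/
def IsNbrAbove (s : Finset ℝ) (x y : ℝ) : Prop :=
  x ∈ s ∧ y ∈ s ∧ x < y ∧ ∀ w ∈ s, ¬(x < w ∧ w < y)

/-- The neighbor of `x` immediately above `x` in `s`. -/
def nbrAbove (s : Finset ℝ) (x : ℝ) : ℝ :=
  sInf {y : ℝ | y ∈ s ∧ x < y}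

/-- The data of the metastable birth-and-death chains of Section 5: a nonnegative smooth
function `H` on `[a,b]` vanishing exactly at `z 1 < ⋯ < z m`, behaving as
`|x − z i| ^ αv i` near `z i`, with `α = max αv i > 1`, and a measurable function `Φ`
bounded away from `0` and `∞`. -/
structure BDSetup where
  a : ℝ
  b : ℝ
  hab : a < b
  m : ℕ
  hm : 0 < m
  z : ℕ → ℝ
  hz_mem : ∀ i ∈ Finset.Icc 1 m, z i ∈ Set.Icc a b
  hz_mono : ∀ i, 1 ≤ i → i < m → z i < z (i + 1)
  H : ℝ → ℝ
  hH_smooth : ContDiffOn ℝ (⊤ : ℕ∞) H (Set.Icc a b)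
  hH_nonneg : ∀ x ∈ Set.Icc a b, 0 ≤ H x
  hH_zero : ∀ x ∈ Set.Icc a b, (H x = 0 ↔ ∃ i ∈ Finset.Icc 1 m, x = z i)
  V : ℕ → Set ℝ
  hV_nhds : ∀ i ∈ Finset.Icc 1 m, V i ∈ nhds (z i)
  hV_disj : ∀ i ∈ Finset.Icc 1 m, ∀ j ∈ Finset.Icc 1 m, i ≠ j → Disjoint (V i) (V j)
  αv : ℕ → ℝ
  hαv_pos : ∀ i ∈ Finset.Icc 1 m, 0 < αv i
  hH_loc : ∀ i ∈ Finset.Icc 1 m, ∀ x ∈ V i ∩ Set.Icc a b, H x = |x - z i| ^ αv i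
  α : ℝ
  hα_max : ∀ i ∈ Finset.Icc 1 m, αv i ≤ α
  hα_mem : ∃ i ∈ Finset.Icc 1 m, αv i = α
  hα_one : 1 < α
  Φ : ℝ → ℝ
  hΦ_meas : Measurable Φ
  δ : ℝ
  hδ : 0 < δ
  hΦ_lb : ∀ x ∈ Set.Icc a b, δ ≤ Φ x
  hΦ_ub : ∀ x ∈ Set.Icc a b, Φ x ≤ δ⁻¹

namespace BDSetup

variable (S : BDSetup)

/-- The numbers `k^N_i`, `0 ≤ i ≤ m`, used in the definition of the state space `E_N`. -/
def kIdx (N i : ℕ) : ℕ :=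
  if i = 0 then sInf {k : ℕ | S.a > S.z 1 - ((k : ℝ) + 1) / N}
  else if i = S.m then sInf {k : ℕ | S.z S.m + ((k : ℝ) + 1) / N > S.b}
  else sInf {k : ℕ | S.z i + ((k : ℝ) + 1) / N > S.z (i + 1) - ((k : ℝ) + 1) / N}

/-- The pieces `G_{N,i}`, `0 ≤ i ≤ m`, of the state space. -/
def seg (N i : ℕ) : Finset ℝ :=
  if i = 0 then (Finset.range (S.kIdx N 0 + 1)).image fun k => S.z 1 - (k : ℝ) / N
  else if i = S.m then
    (Finset.range (S.kIdx N S.m)).image fun k => S.z S.m + ((k : ℝ) + 1) / N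
  else ((Finset.range (S.kIdx N i)).image fun k => S.z i + ((k : ℝ) + 1) / N)
    ∪ ((Finset.range (S.kIdx N i + 1)).image fun k => S.z (i + 1) - (k : ℝ) / N)

/-- The state space `E_N = G_{N,0} ∪ ⋯ ∪ G_{N,m}`. -/
def E (N : ℕ) : Finset ℝ := (Finset.range (S.m + 1)).biUnion (S.seg N)

/-- The normalizing constant
`Z_N = Σ_{x∈E_N ∖ {z 1,…,z m}} H(x)⁻¹ + Σ_{i=1}^m N ^ (αv i)`. -/
def Z (N : ℕ) : ℝ :=
  ∑ x ∈ (S.E N).filter (fun x => ∀ i ∈ Finset.Icc 1 S.m, x ≠ S.z i), (S.H x)⁻¹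
    + ∑ i ∈ Finset.Icc 1 S.m, (N : ℝ) ^ S.αv i

/-- The stationary probability measure `ν_N` on `E_N`. -/
def ν (N : ℕ) (x : ℝ) : ℝ :=
  (if ∀ i ∈ Finset.Icc 1 S.m, x ≠ S.z i then (S.H x)⁻¹
   else ∑ i ∈ Finset.Icc 1 S.m, if x = S.z i then (N : ℝ) ^ S.αv i else 0) / S.Z N

/-- The birth-and-death rates `R_N`. -/
def rate (N : ℕ) (x y : ℝ) : ℝ :=
  if IsNbrAbove (S.E N) x y then S.Φ y * S.ν N y / S.ν N x
  else if IsNbrAbove (S.E N) y x then S.Φ x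
  else 0

/-- The holding rates `λ_N(x) = Σ_{y ≠ x} R_N(x,y)`. -/
def lam (N : ℕ) (x : ℝ) : ℝ := ∑ y ∈ (S.E N).erase x, S.rate N x y

/-- The jump probabilities of the chain. -/
def p (N : ℕ) (x y : ℝ) : ℝ := S.rate N x y / S.lam N x

/-- The capacity `Cap_N(A,B) = Σ_{x∈A} λ_N(x)ν_N(x) P_x[ℍ⁺_B < ℍ⁺_A]`. -/
def capN (N : ℕ) (A B : Set ℝ) : ℝ :=
  ∑' x : A, S.lam N x.1 * S.ν N x.1 * retProb (S.p N) x.1 (A ∪ B) B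

/-- `m(b_i) = 1 + σ_i Σ_{k ≥ 1} k^{−α}` where `σ_i = 1` if `b_i ∈ {a,b}`, `2` otherwise. -/
def mb (i : ℕ) : ℝ :=
  1 + (if S.z i = S.a ∨ S.z i = S.b then 1 else 2) * ∑' k : ℕ, ((k : ℝ) + 1) ^ (-S.α)

/-- `β` enumerates, in increasing order and indexed by `Finset.Icc 1 κ`, the indices of the
zeros of `H` whose exponent `αv i` equals the maximal exponent `α` (the points
`b_1 < ⋯ < b_κ` of the paper are `z (β 1) < ⋯ < z (β κ)`), and there are `κ ≥ 2` of them. -/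
structure BEnum (κ : ℕ) (β : ℕ → ℕ) : Prop where
  two_le : 2 ≤ κ
  mem : ∀ i ∈ Finset.Icc 1 κ, β i ∈ Finset.Icc 1 S.m ∧ S.αv (β i) = S.α
  mono : ∀ i j, 1 ≤ i → i < j → j ≤ κ → β i < β j
  surj : ∀ j ∈ Finset.Icc 1 S.m, S.αv j = S.α → ∃ i ∈ Finset.Icc 1 κ, β i = j

/-- The metastable sets `ℰ^i_N = E_N ∩ [b_i − ℓ_N/N, b_i + ℓ_N/N]`. -/
def metaSet (β : ℕ → ℕ) (ℓ : ℕ → ℕ) (N i : ℕ) : Finset ℝ :=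
  (S.E N).filter fun x =>
    S.z (β i) - (ℓ N : ℝ) / N ≤ x ∧ x ≤ S.z (β i) + (ℓ N : ℝ) / N

end BDSetup

namespace BDSetup
variable (S : BDSetup)

lemma z_lt_z : ∀ {i j : ℕ}, 1 ≤ i → i < j → j ≤ S.m → S.z i < S.z j := by
  intro i j hi
  induction j with
  | zero => omega
  | succ j ih =>
    intro hij hj
    rcases Nat.lt_succ_iff_lt_or_eq.mp hij with h | h
    · exact (ih h (by omega)).trans (S.hz_mono j (by omega) (by omega))
    · subst h; exact S.hz_mono i hi (by omega)

lemma z_inj {i j : ℕ} (hi : 1 ≤ i) (him : i ≤ S.m) (hj : 1 ≤ j) (hjm : j ≤ S.m)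
    (h : S.z i = S.z j) : i = j := by
  by_contra hne
  rcases Nat.lt_or_ge i j with hlt | hge
  · exact absurd h (ne_of_lt (S.z_lt_z hi hlt hjm))
  · exact absurd h.symm (ne_of_lt (S.z_lt_z hj (by omega) him))

lemma z_mem_Icc {i : ℕ} (hi : 1 ≤ i) (him : i ≤ S.m) : S.z i ∈ Set.Icc S.a S.b :=
  S.hz_mem i (Finset.mem_Icc.mpr ⟨hi, him⟩)

/-- The numerator of `ν`. -/
def num (N : ℕ) (x : ℝ) : ℝ :=
  if ∀ i ∈ Finset.Icc 1 S.m, x ≠ S.z i then (S.H x)⁻¹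
  else ∑ i ∈ Finset.Icc 1 S.m, if x = S.z i then (N : ℝ) ^ S.αv i else 0

lemma mem_cast_range {n : ℕ} {x : ℝ} :
    x ∈ ((Finset.range n : Finset ℕ) : Finset ℝ) ↔ ∃ k : ℕ, k < n ∧ x = (k : ℝ) := by
  simp only [Bind.bind, Finset.bind_def, Pure.pure, Finset.pure_def, Finset.mem_sup,
    Finset.mem_range, Finset.mem_singleton]

lemma mem_image_cast_range {n : ℕ} {f : ℝ → ℝ} {x : ℝ} :
    x ∈ Finset.image f ((Finset.range n : Finset ℕ) : Finset ℝ) ↔ ∃ k : ℕ, k < n ∧ x = f k := by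
  rw [Finset.mem_image]
  constructor
  · rintro ⟨y, hy, rfl⟩
    obtain ⟨k, hk, rfl⟩ := mem_cast_range.mp hy
    exact ⟨k, hk, rfl⟩
  · rintro ⟨k, hk, rfl⟩
    exact ⟨k, mem_cast_range.mpr ⟨k, hk, rfl⟩, rfl⟩

lemma ν_def (N : ℕ) (x : ℝ) : S.ν N x = S.num N x / S.Z N := by
  unfold ν num
  congr 1
  congr 1

lemma num_ne (N : ℕ) {x : ℝ} (h : ∀ i ∈ Finset.Icc 1 S.m, x ≠ S.z i) :
    S.num N x = (S.H x)⁻¹ := by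
  unfold num
  split
  · rfl
  · exact absurd h (by assumption)

lemma num_z (N : ℕ) {i : ℕ} (hi : 1 ≤ i) (him : i ≤ S.m) :
    S.num N (S.z i) = (N : ℝ) ^ S.αv i := by
  have hmem : i ∈ Finset.Icc 1 S.m := Finset.mem_Icc.mpr ⟨hi, him⟩
  unfold num
  split
  · rename_i hall; exact absurd rfl (hall i hmem)
  · rw [Finset.sum_eq_single i]
    · simp
    · intro j hj hne
      rw [if_neg]
      intro hzz
      exact hne (S.z_inj (Finset.mem_Icc.mp hj).1 (Finset.mem_Icc.mp hj).2 hi him hzz.symm)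
    · intro hc; exact absurd hmem hc

/-! ### kIdx facts -/

lemma kIdx_zero_def (N : ℕ) : S.kIdx N 0 = sInf {k : ℕ | S.a > S.z 1 - ((k : ℝ) + 1) / N} := by
  simp [kIdx]

lemma kIdx_last_def (N : ℕ) :
    S.kIdx N S.m = sInf {k : ℕ | S.z S.m + ((k : ℝ) + 1) / N > S.b} := by
  have := S.hm
  rw [kIdx, if_neg (by omega), if_pos rfl]

lemma kIdx_mid_def (N : ℕ) {j : ℕ} (hj : 1 ≤ j) (hjm : j < S.m) :
    S.kIdx N j = sInf {k : ℕ | S.z j + ((k : ℝ) + 1) / N > S.z (j + 1) - ((k : ℝ) + 1) / N} := by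
  rw [kIdx, if_neg (by omega), if_neg (by omega)]

lemma div_cast_pos {N : ℕ} (hN : 1 ≤ N) : (0 : ℝ) < N := by
  exact_mod_cast Nat.lt_of_lt_of_le Nat.zero_lt_one hN

lemma div_le_div_nat {k K N : ℕ} (h : k ≤ K) : (k : ℝ) / N ≤ (K : ℝ) / N := by
  rcases Nat.eq_zero_or_pos N with rfl | hN
  · simp
  · have hN' : (0:ℝ) < N := by exact_mod_cast hN
    gcongr

lemma nat_set_helper {c : ℝ} {N : ℕ} (hN : 1 ≤ N) : ∃ k : ℕ, c < ((k : ℝ) + 1) / N := by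
  obtain ⟨k, hk⟩ := exists_nat_gt ((N : ℝ) * c)
  refine ⟨k, ?_⟩
  rw [lt_div_iff₀ (div_cast_pos hN)]
  nlinarith [div_cast_pos hN]

lemma kIdx_zero_spec (N : ℕ) (hN : 1 ≤ N) :
    S.a > S.z 1 - ((S.kIdx N 0 : ℝ) + 1) / N ∧
      (1 ≤ S.kIdx N 0 → S.a ≤ S.z 1 - (S.kIdx N 0 : ℝ) / N) := by
  have hne : {k : ℕ | S.a > S.z 1 - ((k : ℝ) + 1) / N}.Nonempty := by
    obtain ⟨k, hk⟩ := nat_set_helper (c := S.z 1 - S.a) hN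
    exact ⟨k, by simp only [Set.mem_setOf_eq]; linarith⟩
  constructor
  · have := Nat.sInf_mem hne; rw [← S.kIdx_zero_def N] at this; exact this
  · intro h1
    have hnot := Nat.notMem_of_lt_sInf (s := {k : ℕ | S.a > S.z 1 - ((k : ℝ) + 1) / N})
      (m := S.kIdx N 0 - 1) (by rw [← S.kIdx_zero_def N]; omega)
    simp only [Set.mem_setOf_eq, not_lt] at hnot
    have hc : ((S.kIdx N 0 - 1 : ℕ) : ℝ) + 1 = (S.kIdx N 0 : ℝ) := by
      push_cast [Nat.cast_sub h1]; ring
    rw [hc] at hnot; linarith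

lemma kIdx_last_spec (N : ℕ) (hN : 1 ≤ N) :
    S.z S.m + ((S.kIdx N S.m : ℝ) + 1) / N > S.b ∧
      (1 ≤ S.kIdx N S.m → S.z S.m + (S.kIdx N S.m : ℝ) / N ≤ S.b) := by
  have hne : {k : ℕ | S.z S.m + ((k : ℝ) + 1) / N > S.b}.Nonempty := by
    obtain ⟨k, hk⟩ := nat_set_helper (c := S.b - S.z S.m) hN
    exact ⟨k, by simp only [Set.mem_setOf_eq]; linarith⟩
  constructor
  · have := Nat.sInf_mem hne; rw [← S.kIdx_last_def N] at this; exact this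
  · intro h1
    have hnot := Nat.notMem_of_lt_sInf (s := {k : ℕ | S.z S.m + ((k : ℝ) + 1) / N > S.b})
      (m := S.kIdx N S.m - 1) (by rw [← S.kIdx_last_def N]; omega)
    simp only [Set.mem_setOf_eq, not_lt] at hnot
    have hc : ((S.kIdx N S.m - 1 : ℕ) : ℝ) + 1 = (S.kIdx N S.m : ℝ) := by
      push_cast [Nat.cast_sub h1]; ring
    rw [hc] at hnot; linarith

lemma kIdx_mid_spec (N : ℕ) (hN : 1 ≤ N) {j : ℕ} (hj : 1 ≤ j) (hjm : j < S.m) :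
    S.z j + ((S.kIdx N j : ℝ) + 1) / N > S.z (j + 1) - ((S.kIdx N j : ℝ) + 1) / N ∧
      ((S.kIdx N j : ℝ) / N ≤ (S.z (j + 1) - S.z j) / 2) := by
  have hne : {k : ℕ | S.z j + ((k : ℝ) + 1) / N > S.z (j + 1) - ((k : ℝ) + 1) / N}.Nonempty := by
    obtain ⟨k, hk⟩ := nat_set_helper (c := (S.z (j + 1) - S.z j) / 2) hN
    exact ⟨k, by simp only [Set.mem_setOf_eq]; linarith⟩
  refine ⟨?_, ?_⟩
  · have := Nat.sInf_mem hne; rw [← S.kIdx_mid_def N hj hjm] at this; exact this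
  · rcases Nat.eq_zero_or_pos (S.kIdx N j) with h0 | h1
    · rw [h0]
      have := S.z_lt_z hj (Nat.lt_succ_self j) hjm
      simp only [Nat.cast_zero, zero_div]
      linarith
    · have hnot := Nat.notMem_of_lt_sInf
        (s := {k : ℕ | S.z j + ((k : ℝ) + 1) / N > S.z (j + 1) - ((k : ℝ) + 1) / N})
        (m := S.kIdx N j - 1) (by rw [← S.kIdx_mid_def N hj hjm]; omega)
      simp only [Set.mem_setOf_eq, not_lt] at hnot
      have hc : ((S.kIdx N j - 1 : ℕ) : ℝ) + 1 = (S.kIdx N j : ℝ) := by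
        push_cast [Nat.cast_sub h1]; ring
      rw [hc] at hnot
      have hNpos : (0:ℝ) < N := div_cast_pos hN
      have h4 : S.z j * N + (S.kIdx N j : ℝ) ≤ S.z (j + 1) * N - (S.kIdx N j : ℝ) := by
        have h5 := mul_le_mul_of_nonneg_right hnot hNpos.le
        rw [add_mul, sub_mul, div_mul_cancel₀ _ hNpos.ne'] at h5
        exact h5
      rw [div_le_div_iff₀ hNpos (by norm_num : (0:ℝ) < 2)]
      nlinarith

/-! ### seg membership -/

lemma mem_seg_zero_iff (N : ℕ) (x : ℝ) :
    x ∈ S.seg N 0 ↔ ∃ k : ℕ, k ≤ S.kIdx N 0 ∧ x = S.z 1 - (k : ℝ) / N := by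
  rw [seg, if_pos rfl, mem_image_cast_range]
  constructor
  · rintro ⟨k, hk, rfl⟩; exact ⟨k, by omega, rfl⟩
  · rintro ⟨k, hk, rfl⟩; exact ⟨k, by omega, rfl⟩

lemma mem_seg_last_iff (N : ℕ) (x : ℝ) :
    x ∈ S.seg N S.m ↔ ∃ k : ℕ, 1 ≤ k ∧ k ≤ S.kIdx N S.m ∧ x = S.z S.m + (k : ℝ) / N := by
  have hm := S.hm
  rw [seg, if_neg (by omega), if_pos rfl, mem_image_cast_range]
  constructor
  · rintro ⟨k, hk, rfl⟩
    exact ⟨k + 1, by omega, by omega, by push_cast; ring⟩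
  · rintro ⟨k, h1, hk, rfl⟩
    refine ⟨k - 1, by omega, ?_⟩
    have hc : ((k - 1 : ℕ) : ℝ) + 1 = (k : ℝ) := by push_cast [Nat.cast_sub h1]; ring
    rw [hc]

lemma mem_seg_mid_iff (N : ℕ) {j : ℕ} (hj : 1 ≤ j) (hjm : j < S.m) (x : ℝ) :
    x ∈ S.seg N j ↔
      (∃ k : ℕ, 1 ≤ k ∧ k ≤ S.kIdx N j ∧ x = S.z j + (k : ℝ) / N) ∨
        ∃ k : ℕ, k ≤ S.kIdx N j ∧ x = S.z (j + 1) - (k : ℝ) / N := by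
  rw [seg, if_neg (by omega), if_neg (by omega), Finset.mem_union,
    mem_image_cast_range, mem_image_cast_range]
  constructor
  · rintro (⟨k, hk, rfl⟩ | ⟨k, hk, rfl⟩)
    · exact Or.inl ⟨k + 1, by omega, by omega, by push_cast; ring⟩
    · exact Or.inr ⟨k, by omega, rfl⟩
  · rintro (⟨k, h1, hk, rfl⟩ | ⟨k, hk, rfl⟩)
    · refine Or.inl ⟨k - 1, by omega, ?_⟩
      have hc : ((k - 1 : ℕ) : ℝ) + 1 = (k : ℝ) := by push_cast [Nat.cast_sub h1]; ring
      rw [hc]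
    · exact Or.inr ⟨k, by omega, rfl⟩

lemma mem_E_iff (N : ℕ) (x : ℝ) : x ∈ S.E N ↔ ∃ j ≤ S.m, x ∈ S.seg N j := by
  simp only [E, Finset.mem_biUnion, Finset.mem_range, Nat.lt_succ_iff]

lemma z_mem_E (N : ℕ) {i : ℕ} (hi : 1 ≤ i) (him : i ≤ S.m) : S.z i ∈ S.E N := by
  rw [mem_E_iff]
  rcases Nat.eq_or_lt_of_le hi with h1 | h2
  · exact ⟨0, Nat.zero_le _, by
      rw [mem_seg_zero_iff]; exact ⟨0, Nat.zero_le _, by simp [← h1]⟩⟩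
  · refine ⟨i - 1, by omega, ?_⟩
    rcases Nat.lt_or_ge (i - 1) S.m with hlt | hge
    · rw [mem_seg_mid_iff S N (by omega) hlt]
      refine Or.inr ⟨0, Nat.zero_le _, by
        simp [Nat.sub_add_cancel (by omega : 1 ≤ i)]⟩
    · omega

lemma mem_E_Icc {N : ℕ} (hN : 1 ≤ N) {x : ℝ} (hx : x ∈ S.E N) : x ∈ Set.Icc S.a S.b := by
  have hNpos : (0:ℝ) < N := div_cast_pos hN
  have hm := S.hm
  obtain ⟨j, hjm, hseg⟩ := (S.mem_E_iff N x).mp hx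
  rcases Nat.eq_zero_or_pos j with rfl | hj1
  · obtain ⟨k, hk, rfl⟩ := (S.mem_seg_zero_iff N x).mp hseg
    have h1 := (S.kIdx_zero_spec N hN).1
    have hz1 := S.z_mem_Icc (i := 1) le_rfl hm
    have hk' : (k : ℝ) / N ≤ (S.kIdx N 0 : ℝ) / N := div_le_div_nat hk
    have hk0 : (0:ℝ) ≤ (k : ℝ) / N := by positivity
    refine ⟨?_, by linarith [hz1.2]⟩
    rcases Nat.eq_zero_or_pos (S.kIdx N 0) with h0 | hpos
    · have hk00 : k = 0 := by omega
      subst hk00; simpa using hz1.1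
    · have h2 := (S.kIdx_zero_spec N hN).2 hpos
      linarith
  · rcases Nat.lt_or_ge j S.m with hjlt | hjge
    · have hzj := S.z_mem_Icc hj1 (le_of_lt hjlt)
      have hzj1 := S.z_mem_Icc (i := j + 1) (by omega) hjlt
      have hmid := (S.kIdx_mid_spec N hN hj1 hjlt).2
      have hzlt := S.z_lt_z hj1 (Nat.lt_succ_self j) hjlt
      rcases (S.mem_seg_mid_iff N hj1 hjlt x).mp hseg with ⟨k, h1k, hk, rfl⟩ | ⟨k, hk, rfl⟩
      · have hk' : (k : ℝ) / N ≤ (S.kIdx N j : ℝ) / N := div_le_div_nat hk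
        have hk0 : (0:ℝ) ≤ (k : ℝ) / N := by positivity
        exact ⟨by linarith [hzj.1], by linarith [hzj1.2]⟩
      · have hk' : (k : ℝ) / N ≤ (S.kIdx N j : ℝ) / N := div_le_div_nat hk
        have hk0 : (0:ℝ) ≤ (k : ℝ) / N := by positivity
        exact ⟨by linarith [hzj.1], by linarith [hzj1.2]⟩
    · have hjm' : j = S.m := le_antisymm hjm hjge
      subst hjm'
      obtain ⟨k, h1k, hk, rfl⟩ := (S.mem_seg_last_iff N x).mp hseg
      have hlast := (S.kIdx_last_spec N hN).2 (le_trans h1k hk)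
      have hzm := S.z_mem_Icc (i := S.m) hm le_rfl
      have hk' : (k : ℝ) / N ≤ (S.kIdx N S.m : ℝ) / N := div_le_div_nat hk
      have hk0 : (0:ℝ) ≤ (k : ℝ) / N := by positivity
      exact ⟨by linarith [hzm.1], by linarith⟩

lemma H_nonneg_of_mem_E {N : ℕ} (hN : 1 ≤ N) {x : ℝ} (hx : x ∈ S.E N) : 0 ≤ S.H x :=
  S.hH_nonneg x (S.mem_E_Icc hN hx)

lemma num_nonneg {N : ℕ} (hN : 1 ≤ N) {x : ℝ} (hx : x ∈ S.E N) : 0 ≤ S.num N x := by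
  rw [num]
  split
  · exact inv_nonneg.mpr (S.H_nonneg_of_mem_E hN hx)
  · exact Finset.sum_nonneg fun i _ => by
      split
      · positivity
      · exact le_refl 0
lemma filter_not_ne_eq (N : ℕ) :
    ((S.E N).filter fun x => ¬ ∀ i ∈ Finset.Icc 1 S.m, x ≠ S.z i)
      = (Finset.Icc 1 S.m).image S.z := by
  ext x
  simp only [Finset.mem_filter, Finset.mem_image, not_forall]
  constructor
  · rintro ⟨hxE, i, hi, hne⟩
    rw [not_ne_iff] at hne
    exact ⟨i, hi, hne.symm⟩
  · rintro ⟨i, hi, rfl⟩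
    obtain ⟨h1, h2⟩ := Finset.mem_Icc.mp hi
    exact ⟨S.z_mem_E N h1 h2, i, hi, by simp⟩

lemma Z_eq (N : ℕ) : S.Z N =
    (∑ x ∈ (S.E N).filter (fun x => ∀ i ∈ Finset.Icc 1 S.m, x ≠ S.z i), (S.H x)⁻¹)
      + ∑ i ∈ Finset.Icc 1 S.m, (N : ℝ) ^ S.αv i := by
  rw [Z, Finset.filter_congr_decidable]

lemma sum_num_eq_Z (N : ℕ) : ∑ x ∈ S.E N, S.num N x = S.Z N := by
  have key := (Finset.sum_filter_add_sum_filter_not (S.E N)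
    (fun x => ∀ i ∈ Finset.Icc 1 S.m, x ≠ S.z i) (S.num N)).symm
  rw [key, S.Z_eq N]
  congr 1
  · refine Finset.sum_congr rfl fun x hx => ?_
    simp only [Finset.mem_filter] at hx
    exact S.num_ne N hx.2
  · rw [S.filter_not_ne_eq N, Finset.sum_image]
    · exact Finset.sum_congr rfl fun i hi =>
        S.num_z N (Finset.mem_Icc.mp hi).1 (Finset.mem_Icc.mp hi).2
    · intro i hi j hj h
      exact S.z_inj (Finset.mem_Icc.mp hi).1 (Finset.mem_Icc.mp hi).2
        (Finset.mem_Icc.mp hj).1 (Finset.mem_Icc.mp hj).2 h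

lemma Z_pos (N : ℕ) (hN : 1 ≤ N) : 0 < S.Z N := by
  rw [S.Z_eq N]
  have h1 : (0:ℝ) ≤ ∑ x ∈ (S.E N).filter (fun x => ∀ i ∈ Finset.Icc 1 S.m, x ≠ S.z i),
      (S.H x)⁻¹ := by
    apply Finset.sum_nonneg
    intro x hx
    simp only [Finset.mem_filter] at hx
    exact inv_nonneg.mpr (S.H_nonneg_of_mem_E hN hx.1)
  have h2 : (0:ℝ) < ∑ i ∈ Finset.Icc 1 S.m, (N : ℝ) ^ S.αv i := by
    apply Finset.sum_pos
    · intro i _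
      exact Real.rpow_pos_of_pos (div_cast_pos hN) _
    · exact ⟨1, Finset.mem_Icc.mpr ⟨le_rfl, S.hm⟩⟩
  linarith

lemma sum_ν_eq (N : ℕ) (s : Finset ℝ) :
    ∑ x ∈ s, S.ν N x = (∑ x ∈ s, S.num N x) / S.Z N := by
  rw [Finset.sum_div]
  exact Finset.sum_congr rfl fun x _ => S.ν_def N x

/-- Choice of a small geometric constant. -/
lemma exists_eps : ∃ ε : ℝ, 0 < ε ∧ ε ≤ 1 ∧
    (∀ i, 1 ≤ i → i ≤ S.m → Set.Icc (S.z i - ε) (S.z i + ε) ⊆ S.V i) ∧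
    (∀ i, 1 ≤ i → i < S.m → 4 * ε < S.z (i + 1) - S.z i) := by
  have hδ : ∀ i ∈ Finset.Icc 1 S.m, ∃ d : ℝ, 0 < d ∧ Set.Icc (S.z i - d) (S.z i + d) ⊆ S.V i := by
    intro i hi
    obtain ⟨d, hd, hball⟩ := Metric.mem_nhds_iff.mp (S.hV_nhds i hi)
    refine ⟨d / 2, by linarith, ?_⟩
    intro y hy
    apply hball
    rw [Metric.mem_ball, Real.dist_eq, abs_sub_lt_iff]
    simp only [Set.mem_Icc] at hy
    constructor <;> linarith
  choose! d hd0 hdV using hδ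
  set f : ℕ → ℝ := fun i => min (d i) (if i < S.m then (S.z (i + 1) - S.z i) / 5 else 1) with hf
  have hne : (Finset.Icc 1 S.m).Nonempty := ⟨1, Finset.mem_Icc.mpr ⟨le_rfl, S.hm⟩⟩
  set ε : ℝ := min 1 ((Finset.Icc 1 S.m).inf' hne f) with hε
  have hfpos : ∀ i ∈ Finset.Icc 1 S.m, 0 < f i := by
    intro i hi
    apply lt_min (hd0 i hi)
    split
    · rename_i h
      have := S.z_lt_z (Finset.mem_Icc.mp hi).1 (Nat.lt_succ_self i) h
      linarith
    · norm_num
  have hεpos : 0 < ε := lt_min one_pos ((Finset.lt_inf'_iff hne).mpr hfpos)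
  have hεle : ∀ i ∈ Finset.Icc 1 S.m, ε ≤ f i := fun i hi =>
    le_trans (min_le_right _ _) (Finset.inf'_le f hi)
  refine ⟨ε, hεpos, min_le_left _ _, ?_, ?_⟩
  · intro i h1 h2
    have hi : i ∈ Finset.Icc 1 S.m := Finset.mem_Icc.mpr ⟨h1, h2⟩
    have h3 : ε ≤ d i := le_trans (hεle i hi) (min_le_left _ _)
    intro y hy
    apply hdV i hi
    simp only [Set.mem_Icc] at hy ⊢
    constructor <;> linarith
  · intro i h1 h2
    have hi : i ∈ Finset.Icc 1 S.m := Finset.mem_Icc.mpr ⟨h1, le_of_lt h2⟩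
    have h3 : ε ≤ (S.z (i + 1) - S.z i) / 5 := by
      have := hεle i hi
      rw [hf] at this
      simp only [if_pos h2] at this
      exact le_trans this (min_le_right _ _)
    have := S.z_lt_z h1 (Nat.lt_succ_self i) h2
    linarith

/-- Localization: a point of `E_N` at distance at most `r` from `z q` is a grid point
`z q ± k/N` with the appropriate index bound. -/
lemma E_structure {N : ℕ} (hN : 1 ≤ N) {x : ℝ} (hx : x ∈ S.E N) {q : ℕ} (hq1 : 1 ≤ q)
    (hqm : q ≤ S.m) {r : ℝ} (hr : 0 ≤ r)
    (hrgap : ∀ i, 1 ≤ i → i < S.m → 2 * r < S.z (i + 1) - S.z i)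
    (hxq : |x - S.z q| ≤ r) :
    ∃ k : ℕ, (k : ℝ) / N ≤ r ∧
      ((x = S.z q - (k : ℝ) / N ∧ k ≤ S.kIdx N (q - 1)) ∨
        (x = S.z q + (k : ℝ) / N ∧ 1 ≤ k ∧ k ≤ S.kIdx N q)) := by
  have hNpos : (0:ℝ) < N := div_cast_pos hN
  have hm := S.hm
  rw [abs_sub_le_iff] at hxq
  obtain ⟨j, hjm, hseg⟩ := (S.mem_E_iff N x).mp hx
  rcases Nat.eq_zero_or_pos j with rfl | hj1
  · obtain ⟨k, hk, rfl⟩ := (S.mem_seg_zero_iff N x).mp hseg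
    have hk0 : (0:ℝ) ≤ (k : ℝ) / N := by positivity
    rcases Nat.eq_or_lt_of_le hq1 with rfl | h2
    · exact ⟨k, by linarith [hxq.2], Or.inl ⟨rfl, hk⟩⟩
    · exfalso
      have hgap := hrgap (q - 1) (by omega) (by omega)
      have hz1q : S.z 1 ≤ S.z (q - 1) := by
        rcases Nat.eq_or_lt_of_le (show 1 ≤ q - 1 by omega) with h | h
        · rw [← h]
        · exact le_of_lt (S.z_lt_z le_rfl h (by omega))
      have hq' : q - 1 + 1 = q := by omega
      rw [hq'] at hgap
      linarith [hxq.2]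
  · rcases Nat.lt_or_ge j S.m with hjlt | hjge
    · have hmid := (S.kIdx_mid_spec N hN hj1 hjlt).2
      have hzlt := S.z_lt_z hj1 (Nat.lt_succ_self j) hjlt
      rcases (S.mem_seg_mid_iff N hj1 hjlt x).mp hseg with ⟨k, h1k, hk, rfl⟩ | ⟨k, hk, rfl⟩
      all_goals have hk' : (k : ℝ) / N ≤ (S.kIdx N j : ℝ) / N := div_le_div_nat hk
      all_goals have hk0 : (0:ℝ) ≤ (k : ℝ) / N := by positivity
      · -- x = z j + k/N, 1 ≤ k ≤ kIdx j
        rcases Nat.lt_trichotomy q j with hlt | heq | hgt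
        · exfalso
          have hgap := hrgap q hq1 (by omega)
          have : S.z (q + 1) ≤ S.z j := by
            rcases Nat.eq_or_lt_of_le (show q + 1 ≤ j by omega) with h | h
            · rw [h]
            · exact le_of_lt (S.z_lt_z (by omega) h (by omega))
          linarith [hxq.1]
        · subst heq
          exact ⟨k, by linarith [hxq.1], Or.inr ⟨rfl, h1k, hk⟩⟩
        · exfalso
          have hgapj := hrgap j hj1 hjlt
          rcases Nat.eq_or_lt_of_le (show j + 1 ≤ q by omega) with h | h
          · rw [← h] at hxq
            linarith [hxq.2]
          · have hgap := hrgap (q - 1) (by omega) (by omega)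
            have hj1q : S.z (j + 1) ≤ S.z (q - 1) := by
              rcases Nat.eq_or_lt_of_le (show j + 1 ≤ q - 1 by omega) with h' | h'
              · rw [h']
              · exact le_of_lt (S.z_lt_z (by omega) h' (by omega))
            have hq' : q - 1 + 1 = q := by omega
            rw [hq'] at hgap
            linarith [hxq.2]
      · -- x = z (j+1) - k/N, k ≤ kIdx j
        rcases Nat.lt_trichotomy q (j + 1) with hlt | heq | hgt
        · exfalso
          have hgapj := hrgap j hj1 hjlt
          rcases Nat.eq_or_lt_of_le (show q ≤ j by omega) with h | h
          · subst h
            linarith [hxq.1]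
          · have hzq1j : S.z (q + 1) ≤ S.z j := by
              rcases Nat.eq_or_lt_of_le (show q + 1 ≤ j by omega) with h' | h'
              · rw [h']
              · exact le_of_lt (S.z_lt_z (by omega) h' (by omega))
            have hgap := hrgap q hq1 (by omega)
            linarith [hxq.1]
        · subst heq
          exact ⟨k, by linarith [hxq.2], Or.inl ⟨rfl, hk⟩⟩
        · exfalso
          have hgap := hrgap (q - 1) (by omega) (by omega)
          have hj1q : S.z (j + 1) ≤ S.z (q - 1) := by
            rcases Nat.eq_or_lt_of_le (show j + 1 ≤ q - 1 by omega) with h' | h'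
            · rw [h']
            · exact le_of_lt (S.z_lt_z (by omega) h' (by omega))
          have hq' : q - 1 + 1 = q := by omega
          rw [hq'] at hgap
          linarith [hxq.2]
    · have hjm' : j = S.m := le_antisymm hjm hjge
      subst hjm'
      obtain ⟨k, h1k, hk, rfl⟩ := (S.mem_seg_last_iff N x).mp hseg
      have hk0 : (0:ℝ) ≤ (k : ℝ) / N := by positivity
      rcases Nat.eq_or_lt_of_le hqm with h | h
      · subst h
        exact ⟨k, by linarith [hxq.1], Or.inr ⟨rfl, h1k, hk⟩⟩
      · exfalso
        have hgap := hrgap q hq1 h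
        have hzq1m : S.z (q + 1) ≤ S.z S.m := by
          rcases Nat.eq_or_lt_of_le (show q + 1 ≤ S.m by omega) with h' | h'
          · rw [h']
          · exact le_of_lt (S.z_lt_z (by omega) h' (by omega))
        linarith [hxq.1]
/-! ### analytic toolbox -/

lemma alpha_pos : (0:ℝ) < S.α := lt_trans one_pos S.hα_one

lemma summable_P : Summable (fun k : ℕ => ((k : ℝ) + 1) ^ (-S.α)) := by
  have h := Real.summable_nat_rpow_inv.mpr S.hα_one
  have h2 := (summable_nat_add_iff 1).mpr h
  apply h2.congr
  intro k
  rw [Real.rpow_neg (by positivity)]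
  push_cast
  ring_nf

lemma phi_tendsto :
    Tendsto (fun L : ℕ => ∑ u ∈ Finset.range L, ((u : ℝ) + 1) ^ (-S.α)) atTop
      (𝓝 (∑' k : ℕ, ((k : ℝ) + 1) ^ (-S.α))) :=
  S.summable_P.hasSum.tendsto_sum_nat

lemma phi_le (L : ℕ) :
    ∑ u ∈ Finset.range L, ((u : ℝ) + 1) ^ (-S.α) ≤ ∑' k : ℕ, ((k : ℝ) + 1) ^ (-S.α) :=
  Summable.sum_le_tsum _ (fun k _ => by positivity) S.summable_P

lemma nat_div_le {k l N : ℕ} (hN : 1 ≤ N) (h : (k : ℝ) / N ≤ (l : ℝ) / N) : k ≤ l := by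
  have hN' : (0:ℝ) < N := div_cast_pos hN
  have h2 : (k : ℝ) ≤ l := by
    have h3 := mul_le_mul_of_nonneg_right h hN'.le
    rwa [div_mul_cancel₀ _ hN'.ne', div_mul_cancel₀ _ hN'.ne'] at h3
  exact_mod_cast h2

lemma z_sep {ε : ℝ} (hgap : ∀ i, 1 ≤ i → i < S.m → 4 * ε < S.z (i + 1) - S.z i)
    {i j : ℕ} (h1 : 1 ≤ i) (hij : i < j) (hjm : j ≤ S.m) : 4 * ε < S.z j - S.z i := by
  have h := hgap i h1 (lt_of_lt_of_le hij hjm)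
  have h2 : S.z (i + 1) ≤ S.z j := by
    rcases Nat.eq_or_lt_of_le (show i + 1 ≤ j by omega) with h' | h'
    · rw [h']
    · exact le_of_lt (S.z_lt_z (by omega) h' hjm)
  linarith

lemma q_eq_one_of_eq_a {q : ℕ} (hq1 : 1 ≤ q) (hqm : q ≤ S.m) (h : S.z q = S.a) : q = 1 := by
  by_contra hne
  have h1 := S.z_lt_z (i := 1) le_rfl (by omega) hqm
  have h2 := (S.z_mem_Icc le_rfl S.hm).1
  rw [h] at h1
  linarith

lemma q_eq_m_of_eq_b {q : ℕ} (hq1 : 1 ≤ q) (hqm : q ≤ S.m) (h : S.z q = S.b) : q = S.m := by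
  by_contra hne
  have h1 := S.z_lt_z hq1 (show q < S.m by omega) le_rfl
  have h2 := (S.z_mem_Icc S.hm le_rfl).2
  rw [h] at h1
  linarith

lemma kIdx_zero_of_boundary {N : ℕ} (hN : 1 ≤ N) (h : S.z 1 = S.a) : S.kIdx N 0 = 0 := by
  by_contra h0
  have h2 := (S.kIdx_zero_spec N hN).2 (by omega)
  have hpos : (0:ℝ) < (S.kIdx N 0 : ℝ) / N := by
    apply div_pos _ (div_cast_pos hN)
    exact_mod_cast Nat.pos_of_ne_zero h0
  rw [h] at h2
  linarith

lemma kIdx_last_of_boundary {N : ℕ} (hN : 1 ≤ N) (h : S.z S.m = S.b) : S.kIdx N S.m = 0 := by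
  by_contra h0
  have h2 := (S.kIdx_last_spec N hN).2 (by omega)
  have hpos : (0:ℝ) < (S.kIdx N S.m : ℝ) / N := by
    apply div_pos _ (div_cast_pos hN)
    exact_mod_cast Nat.pos_of_ne_zero h0
  rw [h] at h2
  linarith

lemma num_offgrid {ε : ℝ} (hε0 : 0 < ε)
    (hV : ∀ i, 1 ≤ i → i ≤ S.m → Set.Icc (S.z i - ε) (S.z i + ε) ⊆ S.V i)
    (hgap : ∀ i, 1 ≤ i → i < S.m → 4 * ε < S.z (i + 1) - S.z i)
    {N : ℕ} (hN : 1 ≤ N) {q : ℕ} (hq1 : 1 ≤ q) (hqm : q ≤ S.m) {x : ℝ}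
    (hxE : x ∈ S.E N) (hne : x ≠ S.z q) (hclose : |x - S.z q| ≤ ε) :
    S.num N x = |x - S.z q| ^ (-S.αv q) := by
  have hxIcc := S.mem_E_Icc hN hxE
  have hnum : ∀ i ∈ Finset.Icc 1 S.m, x ≠ S.z i := by
    intro i hi
    obtain ⟨hi1, him⟩ := Finset.mem_Icc.mp hi
    rcases Nat.lt_trichotomy i q with hlt | heq | hgt
    · intro hxz
      have := S.z_sep hgap hi1 hlt hqm
      have h2 : |S.z i - S.z q| = S.z q - S.z i := by
        rw [abs_of_nonpos (by linarith [S.z_lt_z hi1 hlt hqm])]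
        ring
      rw [hxz, h2] at hclose
      linarith [S.z_lt_z hi1 hlt hqm]
    · subst heq; exact hne
    · intro hxz
      have := S.z_sep hgap hq1 hgt him
      have h2 : |S.z i - S.z q| = S.z i - S.z q := by
        rw [abs_of_nonneg (by linarith [S.z_lt_z hq1 hgt him])]
      rw [hxz, h2] at hclose
      linarith [S.z_lt_z hq1 hgt him]
  rw [S.num_ne N hnum, S.hH_loc q (Finset.mem_Icc.mpr ⟨hq1, hqm⟩) x
    ⟨hV q hq1 hqm (by rw [Set.mem_Icc]; rw [abs_sub_le_iff] at hclose; constructor <;> linarith [hclose.1, hclose.2]), hxIcc⟩,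
    Real.rpow_neg (abs_nonneg _)]

/-- Eventually `ℓ N ≤ kIdx` on the left of an interior-from-the-left zero. -/
lemma ev_kIdx_left (ℓ : ℕ → ℕ) (hℓ_o : Tendsto (fun N => (ℓ N : ℝ) / N) atTop (𝓝 0))
    {q : ℕ} (hq1 : 1 ≤ q) (hqm : q ≤ S.m) (h : S.z q ≠ S.a) :
    ∀ᶠ N in atTop, ℓ N ≤ S.kIdx N (q - 1) := by
  have hg : ∃ g : ℝ, 0 < g ∧ ∀ N : ℕ, 1 ≤ N → g * N < (S.kIdx N (q - 1) : ℝ) + 1 := by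
    rcases Nat.eq_or_lt_of_le hq1 with rfl | h2
    · have ha := (S.z_mem_Icc le_rfl S.hm).1
      refine ⟨S.z 1 - S.a, by rcases lt_or_eq_of_le ha with h' | h'; · linarith
                              · exact absurd h'.symm h, ?_⟩
      intro N hN
      have hs := (S.kIdx_zero_spec N hN).1
      have hN' : (0:ℝ) < N := div_cast_pos hN
      exact (lt_div_iff₀ hN').mp (by linarith)
    · refine ⟨(S.z q - S.z (q - 1)) / 2, by
        have := S.z_lt_z (show 1 ≤ q - 1 by omega) (show q - 1 < q by omega) hqm
        linarith, ?_⟩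
      intro N hN
      have hs := (S.kIdx_mid_spec N hN (show 1 ≤ q - 1 by omega) (show q - 1 < S.m by omega)).1
      have hq' : q - 1 + 1 = q := by omega
      rw [hq'] at hs
      have hN' : (0:ℝ) < N := div_cast_pos hN
      exact (lt_div_iff₀ hN').mp (by linarith)
  obtain ⟨g, hg0, hgN⟩ := hg
  have h1 : ∀ᶠ N : ℕ in atTop, (ℓ N : ℝ) / N < g := by
    have := hℓ_o (Metric.ball_mem_nhds 0 hg0)
    filter_upwards [this] with N hN
    simp only [Set.mem_preimage, Metric.mem_ball, Real.dist_eq, sub_zero] at hN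
    exact lt_of_abs_lt hN
  filter_upwards [h1, Filter.eventually_ge_atTop 1] with N hN1 hN2
  have hN' : (0:ℝ) < N := div_cast_pos hN2
  have h2 : (ℓ N : ℝ) < g * N := by
    have := (div_lt_iff₀ hN').mp hN1
    linarith
  have h3 : (ℓ N : ℝ) < (S.kIdx N (q - 1) : ℝ) + 1 := lt_trans h2 (hgN N hN2)
  exact_mod_cast Nat.lt_succ_iff.mp (by exact_mod_cast h3)

lemma ev_kIdx_right (ℓ : ℕ → ℕ) (hℓ_o : Tendsto (fun N => (ℓ N : ℝ) / N) atTop (𝓝 0))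
    {q : ℕ} (hq1 : 1 ≤ q) (hqm : q ≤ S.m) (h : S.z q ≠ S.b) :
    ∀ᶠ N in atTop, ℓ N ≤ S.kIdx N q := by
  have hg : ∃ g : ℝ, 0 < g ∧ ∀ N : ℕ, 1 ≤ N → g * N < (S.kIdx N q : ℝ) + 1 := by
    rcases Nat.eq_or_lt_of_le hqm with heq | h2
    · have hb := (S.z_mem_Icc hq1 hqm).2
      refine ⟨S.b - S.z q, by rcases lt_or_eq_of_le hb with h' | h'; · linarith
                              · exact absurd h' h, ?_⟩
      intro N hN
      have hs := (S.kIdx_last_spec N hN).1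
      rw [← heq] at hs
      have hN' : (0:ℝ) < N := div_cast_pos hN
      exact (lt_div_iff₀ hN').mp (by linarith)
    · refine ⟨(S.z (q + 1) - S.z q) / 2, by
        have := S.z_lt_z hq1 (Nat.lt_succ_self q) h2
        linarith, ?_⟩
      intro N hN
      have hs := (S.kIdx_mid_spec N hN hq1 h2).1
      have hN' : (0:ℝ) < N := div_cast_pos hN
      exact (lt_div_iff₀ hN').mp (by linarith)
  obtain ⟨g, hg0, hgN⟩ := hg
  have h1 : ∀ᶠ N : ℕ in atTop, (ℓ N : ℝ) / N < g := by
    have := hℓ_o (Metric.ball_mem_nhds 0 hg0)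
    filter_upwards [this] with N hN
    simp only [Set.mem_preimage, Metric.mem_ball, Real.dist_eq, sub_zero] at hN
    exact lt_of_abs_lt hN
  filter_upwards [h1, Filter.eventually_ge_atTop 1] with N hN1 hN2
  have hN' : (0:ℝ) < N := div_cast_pos hN2
  have h2 : (ℓ N : ℝ) < g * N := by
    have := (div_lt_iff₀ hN').mp hN1
    linarith
  have h3 : (ℓ N : ℝ) < (S.kIdx N q : ℝ) + 1 := lt_trans h2 (hgN N hN2)
  exact_mod_cast Nat.lt_succ_iff.mp (by exact_mod_cast h3)

/-- Explicit description of the metastable set, for suitable `N`. -/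
lemma meta_eq {ε : ℝ} (hε0 : 0 < ε)
    (hgap : ∀ i, 1 ≤ i → i < S.m → 4 * ε < S.z (i + 1) - S.z i)
    (β : ℕ → ℕ) (ℓ : ℕ → ℕ) (i : ℕ) (hq1 : 1 ≤ β i) (hqm : β i ≤ S.m)
    {N : ℕ} (hN : 1 ≤ N) (hεN : (ℓ N : ℝ) / N ≤ ε)
    (hL : S.z (β i) ≠ S.a → ℓ N ≤ S.kIdx N (β i - 1))
    (hR : S.z (β i) ≠ S.b → ℓ N ≤ S.kIdx N (β i)) :
    S.metaSet β ℓ N i =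
      ((Finset.range ((if S.z (β i) = S.a then 0 else ℓ N) + 1)).image
          fun u : ℕ => S.z (β i) - (u : ℝ) / N)
        ∪ ((Finset.range (if S.z (β i) = S.b then 0 else ℓ N)).image
          fun u : ℕ => S.z (β i) + ((u : ℝ) + 1) / N) := by
  have hN' : (0:ℝ) < N := div_cast_pos hN
  set q := β i with hq
  have hlN : (0:ℝ) ≤ (ℓ N : ℝ) / N := by positivity
  ext x
  simp only [metaSet, Finset.mem_filter, Finset.mem_union, Finset.mem_image, Finset.mem_range]
  constructor
  · rintro ⟨hxE, hc1, hc2⟩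
    have hxq : |x - S.z q| ≤ (ℓ N : ℝ) / N := by
      rw [abs_sub_le_iff]; constructor <;> linarith
    obtain ⟨k, hkr, hcase⟩ := S.E_structure hN hxE hq1 hqm hlN
      (fun j h1 h2 => by have := hgap j h1 h2; linarith [hεN]) hxq
    have hkl : k ≤ ℓ N := nat_div_le hN hkr
    rcases hcase with ⟨hxe, hkK⟩ | ⟨hxe, hk1, hkK⟩
    · left
      by_cases ha : S.z q = S.a
      · have hq1' : q = 1 := S.q_eq_one_of_eq_a hq1 hqm ha
        have h0 : S.kIdx N 0 = 0 := S.kIdx_zero_of_boundary hN (by rwa [← hq1'])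
        rw [hq1', h0] at hkK
        refine ⟨0, by simp [ha], ?_⟩
        interval_cases k
        simpa using hxe.symm
      · exact ⟨k, by simp [ha]; omega, hxe.symm⟩
    · right
      by_cases hb : S.z q = S.b
      · exfalso
        have hqm' : q = S.m := S.q_eq_m_of_eq_b hq1 hqm hb
        have h0 : S.kIdx N S.m = 0 := S.kIdx_last_of_boundary hN (by rwa [← hqm'])
        rw [hqm'] at hkK
        omega
      · refine ⟨k - 1, by simp [hb]; omega, ?_⟩
        have hc : ((k - 1 : ℕ) : ℝ) + 1 = (k : ℝ) := by push_cast [Nat.cast_sub hk1]; ring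
        rw [hc]; exact hxe.symm
  · rintro (⟨u, hu, rfl⟩ | ⟨u, hu, rfl⟩)
    · have hucl : u ≤ if S.z q = S.a then 0 else ℓ N := by omega
      have huℓ : u ≤ ℓ N := le_trans hucl (by split <;> omega)
      have hdiv : (u : ℝ) / N ≤ (ℓ N : ℝ) / N := div_le_div_nat huℓ
      have hu0 : (0:ℝ) ≤ (u : ℝ) / N := by positivity
      refine ⟨?_, by linarith, by linarith⟩
      rcases Nat.eq_zero_or_pos u with rfl | hu1
      · simpa using S.z_mem_E N hq1 hqm
      · have hne : S.z q ≠ S.a := by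
          intro ha
          rw [if_pos ha] at hucl
          omega
        have hukI : u ≤ S.kIdx N (q - 1) := le_trans huℓ (hL hne)
        rw [mem_E_iff]
        rcases Nat.eq_or_lt_of_le hq1 with hq1' | hq2
        · refine ⟨0, Nat.zero_le _, ?_⟩
          rw [mem_seg_zero_iff]
          exact ⟨u, by rwa [← hq1'] at hukI, by rw [← hq1']⟩
        · refine ⟨q - 1, by omega, ?_⟩
          rw [S.mem_seg_mid_iff N (show 1 ≤ q - 1 by omega) (show q - 1 < S.m by omega)]
          refine Or.inr ⟨u, hukI, ?_⟩
          have hq' : q - 1 + 1 = q := by omega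
          rw [hq']
    · have hcr : ¬ S.z q = S.b := by
        intro hb
        rw [if_pos hb] at hu
        omega
      rw [if_neg hcr] at hu
      have huℓ : u + 1 ≤ ℓ N := by omega
      have hukI : u + 1 ≤ S.kIdx N q := le_trans huℓ (hR hcr)
      have hdiv : ((u : ℝ) + 1) / N ≤ (ℓ N : ℝ) / N := by
        have := div_le_div_nat (N := N) huℓ
        push_cast at this
        linarith
      have hu0 : (0:ℝ) ≤ ((u : ℝ) + 1) / N := by positivity
      refine ⟨?_, by linarith, by linarith⟩
      rw [mem_E_iff]
      rcases Nat.eq_or_lt_of_le hqm with hq' | hqlt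
      · refine ⟨S.m, le_rfl, ?_⟩
        rw [mem_seg_last_iff]
        exact ⟨u + 1, by omega, by rwa [hq'] at hukI, by rw [← hq']; push_cast; ring_nf⟩
      · refine ⟨q, hqm, ?_⟩
        rw [S.mem_seg_mid_iff N hq1 hqlt]
        exact Or.inl ⟨u + 1, by omega, hukI, by push_cast; ring_nf⟩
lemma meta_subset_E (β ℓ : ℕ → ℕ) (N i : ℕ) : S.metaSet β ℓ N i ⊆ S.E N :=
  Finset.filter_subset _ _

lemma div_rpow_neg {c : ℝ} (hc : 0 < c) {N : ℕ} (hN : 1 ≤ N) (s : ℝ) :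
    (c / N) ^ (-s) = (N : ℝ) ^ s * c ^ (-s) := by
  have hN' : (0:ℝ) < N := div_cast_pos hN
  rw [Real.div_rpow hc.le hN'.le, Real.rpow_neg hN'.le, div_eq_mul_inv, inv_inv, mul_comm]

lemma ev_ratio_le (ℓ : ℕ → ℕ) (hℓ_o : Tendsto (fun N => (ℓ N : ℝ) / N) atTop (𝓝 0))
    {ε : ℝ} (hε0 : 0 < ε) : ∀ᶠ N : ℕ in atTop, (ℓ N : ℝ) / N ≤ ε := by
  filter_upwards [hℓ_o (Metric.ball_mem_nhds 0 hε0)] with N hN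
  simp only [Set.mem_preimage, Metric.mem_ball, Real.dist_eq, sub_zero] at hN
  exact le_of_lt (lt_of_abs_lt hN)

lemma metaSum_tendsto {ε : ℝ} (hε0 : 0 < ε)
    (hV : ∀ i, 1 ≤ i → i ≤ S.m → Set.Icc (S.z i - ε) (S.z i + ε) ⊆ S.V i)
    (hgap : ∀ i, 1 ≤ i → i < S.m → 4 * ε < S.z (i + 1) - S.z i)
    (β ℓ : ℕ → ℕ) (i : ℕ) (hq1 : 1 ≤ β i) (hqm : β i ≤ S.m) (hαq : S.αv (β i) = S.α)
    (hℓ_inf : Tendsto (fun N => (ℓ N : ℝ)) atTop atTop)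
    (hℓ_o : Tendsto (fun N => (ℓ N : ℝ) / N) atTop (𝓝 0)) :
    Tendsto (fun N => (∑ x ∈ S.metaSet β ℓ N i, S.num N x) / (N : ℝ) ^ S.α) atTop
      (𝓝 (S.mb (β i))) := by
  have hℓnat : Tendsto ℓ atTop atTop := tendsto_natCast_atTop_iff.mp hℓ_inf
  have hcomp : Tendsto (fun N => ∑ u ∈ Finset.range (ℓ N), ((u : ℝ) + 1) ^ (-S.α)) atTop
      (𝓝 (∑' k : ℕ, ((k : ℝ) + 1) ^ (-S.α))) := S.phi_tendsto.comp hℓnat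
  set P : ℝ := ∑' k : ℕ, ((k : ℝ) + 1) ^ (-S.α) with hP
  have hca : Tendsto (fun N => if S.z (β i) = S.a then (0:ℝ)
      else ∑ u ∈ Finset.range (ℓ N), ((u : ℝ) + 1) ^ (-S.α)) atTop
      (𝓝 (if S.z (β i) = S.a then 0 else P)) := by
    by_cases ha : S.z (β i) = S.a
    · simp only [if_pos ha]; exact tendsto_const_nhds
    · simp only [if_neg ha]; exact hcomp
  have hcb : Tendsto (fun N => if S.z (β i) = S.b then (0:ℝ)
      else ∑ u ∈ Finset.range (ℓ N), ((u : ℝ) + 1) ^ (-S.α)) atTop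
      (𝓝 (if S.z (β i) = S.b then 0 else P)) := by
    by_cases hb : S.z (β i) = S.b
    · simp only [if_pos hb]; exact tendsto_const_nhds
    · simp only [if_neg hb]; exact hcomp
  have hlim : Tendsto (fun N => 1 + (if S.z (β i) = S.a then (0:ℝ)
      else ∑ u ∈ Finset.range (ℓ N), ((u : ℝ) + 1) ^ (-S.α))
      + (if S.z (β i) = S.b then (0:ℝ)
      else ∑ u ∈ Finset.range (ℓ N), ((u : ℝ) + 1) ^ (-S.α))) atTop
      (𝓝 (1 + (if S.z (β i) = S.a then 0 else P) + (if S.z (β i) = S.b then 0 else P))) :=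
    (tendsto_const_nhds.add hca).add hcb
  have hval : 1 + (if S.z (β i) = S.a then (0:ℝ) else P) + (if S.z (β i) = S.b then 0 else P)
      = S.mb (β i) := by
    rw [mb, ← hP]
    by_cases ha : S.z (β i) = S.a
    · have hb : ¬ S.z (β i) = S.b := fun hb => absurd (ha ▸ hb) (ne_of_lt S.hab)
      rw [if_pos ha, if_neg hb, if_pos (Or.inl ha)]; ring
    · by_cases hb : S.z (β i) = S.b
      · rw [if_neg ha, if_pos hb, if_pos (Or.inr hb)]; ring
      · rw [if_neg ha, if_neg hb, if_neg (by tauto)]; ring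
  rw [hval] at hlim
  apply Tendsto.congr' _ hlim
  have hE3' : ∀ᶠ N : ℕ in atTop, (S.z (β i) ≠ S.a → ℓ N ≤ S.kIdx N (β i - 1)) := by
    by_cases ha : S.z (β i) = S.a
    · exact Filter.Eventually.of_forall fun N h => absurd ha h
    · filter_upwards [S.ev_kIdx_left ℓ hℓ_o hq1 hqm ha] with N h1 _
      exact h1
  have hE4' : ∀ᶠ N : ℕ in atTop, (S.z (β i) ≠ S.b → ℓ N ≤ S.kIdx N (β i)) := by
    by_cases hb : S.z (β i) = S.b
    · exact Filter.Eventually.of_forall fun N h => absurd hb h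
    · filter_upwards [S.ev_kIdx_right ℓ hℓ_o hq1 hqm hb] with N h1 _
      exact h1
  filter_upwards [Filter.eventually_ge_atTop 1, ev_ratio_le ℓ hℓ_o hε0, hE3', hE4']
    with N hN h2 h3 h4
  have hNpos : (0:ℝ) < N := div_cast_pos hN
  have hNα : (0:ℝ) < (N : ℝ) ^ S.α := Real.rpow_pos_of_pos hNpos _
  have hmetaeq := S.meta_eq hε0 hgap β ℓ i hq1 hqm hN h2 h3 h4
  have hinjL : ∀ u ∈ Finset.range ((if S.z (β i) = S.a then 0 else ℓ N) + 1),
      ∀ v ∈ Finset.range ((if S.z (β i) = S.a then 0 else ℓ N) + 1),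
      S.z (β i) - (u : ℝ) / N = S.z (β i) - (v : ℝ) / N → u = v := by
    intro u _ v _ h
    have h' : (u : ℝ) / N = (v : ℝ) / N := by linarith
    exact le_antisymm (nat_div_le hN h'.le) (nat_div_le hN h'.ge)
  have hinjR : ∀ u ∈ Finset.range (if S.z (β i) = S.b then 0 else ℓ N),
      ∀ v ∈ Finset.range (if S.z (β i) = S.b then 0 else ℓ N),
      S.z (β i) + ((u : ℝ) + 1) / N = S.z (β i) + ((v : ℝ) + 1) / N → u = v := by
    intro u _ v _ h
    have h' : ((u : ℝ) + 1) / N = ((v : ℝ) + 1) / N := by linarith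
    field_simp at h'
    exact_mod_cast (by linarith : (u:ℝ) = v)
  have hdisj : Disjoint ((Finset.range ((if S.z (β i) = S.a then 0 else ℓ N) + 1)).image
      fun u : ℕ => S.z (β i) - (u : ℝ) / N)
      ((Finset.range (if S.z (β i) = S.b then 0 else ℓ N)).image
      fun u : ℕ => S.z (β i) + ((u : ℝ) + 1) / N) := by
    rw [Finset.disjoint_left]
    intro x hxL hxR
    obtain ⟨u, _, rfl⟩ := Finset.mem_image.mp hxL
    obtain ⟨v, _, hv⟩ := Finset.mem_image.mp hxR
    have h1 : (0:ℝ) ≤ (u : ℝ) / N := by positivity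
    have h2 : (0:ℝ) < ((v : ℝ) + 1) / N := by positivity
    linarith [hv]
  -- pointwise values
  have hLval : ∀ u ∈ Finset.range (if S.z (β i) = S.a then 0 else ℓ N),
      S.num N (S.z (β i) - ((u + 1 : ℕ) : ℝ) / N)
        = (N : ℝ) ^ S.α * ((u : ℝ) + 1) ^ (-S.α) := by
    intro u hu
    rw [Finset.mem_range] at hu
    have hucl : u + 1 ≤ ℓ N := by
      by_cases ha : S.z (β i) = S.a
      · rw [if_pos ha] at hu; omega
      · rw [if_neg ha] at hu; omega
    have hmem : S.z (β i) - ((u + 1 : ℕ) : ℝ) / N ∈ S.metaSet β ℓ N i := by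
      rw [hmetaeq]
      apply Finset.mem_union_left
      apply Finset.mem_image.mpr
      refine ⟨u + 1, Finset.mem_range.mpr ?_, rfl⟩
      by_cases ha : S.z (β i) = S.a
      · rw [if_pos ha] at hu ⊢; omega
      · rw [if_neg ha] at hu ⊢; omega
    have hxE : S.z (β i) - ((u + 1 : ℕ) : ℝ) / N ∈ S.E N := S.meta_subset_E β ℓ N i hmem
    have hpos : (0:ℝ) < ((u + 1 : ℕ) : ℝ) / N := by positivity
    have hne : S.z (β i) - ((u + 1 : ℕ) : ℝ) / N ≠ S.z (β i) := by
      intro h; nlinarith [hpos]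
    have habs : |S.z (β i) - ((u + 1 : ℕ) : ℝ) / N - S.z (β i)| = ((u + 1 : ℕ) : ℝ) / N := by
      rw [show S.z (β i) - ((u + 1 : ℕ) : ℝ) / N - S.z (β i) = -(((u + 1 : ℕ) : ℝ) / N) by ring,
        abs_neg, abs_of_nonneg hpos.le]
    have hclose : |S.z (β i) - ((u + 1 : ℕ) : ℝ) / N - S.z (β i)| ≤ ε := by
      rw [habs]
      exact le_trans (div_le_div_nat hucl) h2
    rw [S.num_offgrid hε0 hV hgap hN hq1 hqm hxE hne hclose, habs, hαq,
      div_rpow_neg (by positivity) hN]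
    push_cast
    ring_nf
  have hRval : ∀ u ∈ Finset.range (if S.z (β i) = S.b then 0 else ℓ N),
      S.num N (S.z (β i) + ((u : ℝ) + 1) / N)
        = (N : ℝ) ^ S.α * ((u : ℝ) + 1) ^ (-S.α) := by
    intro u hu
    rw [Finset.mem_range] at hu
    have hucl : u + 1 ≤ ℓ N := by
      by_cases hb : S.z (β i) = S.b
      · rw [if_pos hb] at hu; omega
      · rw [if_neg hb] at hu; omega
    have hmem : S.z (β i) + ((u : ℝ) + 1) / N ∈ S.metaSet β ℓ N i := by
      rw [hmetaeq]
      apply Finset.mem_union_right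
      exact Finset.mem_image.mpr ⟨u, Finset.mem_range.mpr hu, rfl⟩
    have hxE : S.z (β i) + ((u : ℝ) + 1) / N ∈ S.E N := S.meta_subset_E β ℓ N i hmem
    have hpos : (0:ℝ) < ((u : ℝ) + 1) / N := by positivity
    have hne : S.z (β i) + ((u : ℝ) + 1) / N ≠ S.z (β i) := by
      intro h; nlinarith [hpos]
    have habs : |S.z (β i) + ((u : ℝ) + 1) / N - S.z (β i)| = ((u : ℝ) + 1) / N := by
      rw [show S.z (β i) + ((u : ℝ) + 1) / N - S.z (β i) = ((u : ℝ) + 1) / N by ring,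
        abs_of_nonneg hpos.le]
    have hclose : |S.z (β i) + ((u : ℝ) + 1) / N - S.z (β i)| ≤ ε := by
      rw [habs]
      refine le_trans ?_ h2
      have := div_le_div_nat (N := N) hucl
      push_cast at this
      linarith
    rw [S.num_offgrid hε0 hV hgap hN hq1 hqm hxE hne hclose, habs, hαq,
      div_rpow_neg (by positivity) hN]
  have hzero : S.num N (S.z (β i) - ((0 : ℕ) : ℝ) / N) = (N : ℝ) ^ S.α := by
    rw [show S.z (β i) - ((0 : ℕ) : ℝ) / N = S.z (β i) by norm_num, S.num_z N hq1 hqm, hαq]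
  rw [hmetaeq, Finset.sum_union hdisj, Finset.sum_image hinjL, Finset.sum_image hinjR,
    Finset.sum_range_succ', Finset.sum_congr rfl hLval, Finset.sum_congr rfl hRval, hzero,
    ← Finset.mul_sum, ← Finset.mul_sum, eq_div_iff hNα.ne']
  have hcl : ∑ u ∈ Finset.range (if S.z (β i) = S.a then 0 else ℓ N), ((u : ℝ) + 1) ^ (-S.α)
      = if S.z (β i) = S.a then 0 else ∑ u ∈ Finset.range (ℓ N), ((u : ℝ) + 1) ^ (-S.α) := by
    split <;> simp
  have hcr : ∑ u ∈ Finset.range (if S.z (β i) = S.b then 0 else ℓ N), ((u : ℝ) + 1) ^ (-S.α)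
      = if S.z (β i) = S.b then 0 else ∑ u ∈ Finset.range (ℓ N), ((u : ℝ) + 1) ^ (-S.α) := by
    split <;> simp
  rw [hcl, hcr]
  ring
lemma kIdx_le (N : ℕ) (hN : 1 ≤ N) {i : ℕ} (him : i ≤ S.m) :
    S.kIdx N i ≤ ⌈(N : ℝ) * (S.b - S.a)⌉₊ := by
  have hN' : (0:ℝ) < N := div_cast_pos hN
  have hba : (0:ℝ) ≤ S.b - S.a := by linarith [S.hab]
  have hceil : (N : ℝ) * (S.b - S.a) ≤ (⌈(N : ℝ) * (S.b - S.a)⌉₊ : ℝ) := Nat.le_ceil _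
  set w := ⌈(N : ℝ) * (S.b - S.a)⌉₊ with hw
  have hm := S.hm
  rcases Nat.eq_zero_or_pos i with rfl | hi1
  · rw [S.kIdx_zero_def N]
    apply Nat.sInf_le
    have hz1 := S.z_mem_Icc (i := 1) le_rfl hm
    simp only [Set.mem_setOf_eq]
    have h2 : S.z 1 - S.a < ((w:ℝ) + 1) / N := by
      rw [lt_div_iff₀ hN']
      nlinarith [mul_le_mul_of_nonneg_right
        (show S.z 1 - S.a ≤ S.b - S.a by linarith [hz1.1, hz1.2]) hN'.le]
    linarith
  · rcases Nat.lt_or_ge i S.m with hlt | hge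
    · rw [S.kIdx_mid_def N hi1 hlt]
      apply Nat.sInf_le
      have hzi := S.z_mem_Icc hi1 (le_of_lt hlt)
      have hzi1 := S.z_mem_Icc (i := i + 1) (by omega) hlt
      simp only [Set.mem_setOf_eq]
      have h2 : (S.z (i + 1) - S.z i) / 2 < ((w:ℝ) + 1) / N := by
        rw [div_lt_div_iff₀ (by norm_num) hN']
        nlinarith [mul_le_mul_of_nonneg_right
          (show S.z (i + 1) - S.z i ≤ S.b - S.a by linarith [hzi.1, hzi1.2]) hN'.le]
      linarith
    · have : i = S.m := le_antisymm him hge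
      subst this
      rw [S.kIdx_last_def N]
      apply Nat.sInf_le
      have hzm := S.z_mem_Icc (i := S.m) hm le_rfl
      simp only [Set.mem_setOf_eq]
      have h2 : S.b - S.z S.m < ((w:ℝ) + 1) / N := by
        rw [lt_div_iff₀ hN']
        nlinarith [mul_le_mul_of_nonneg_right
          (show S.b - S.z S.m ≤ S.b - S.a by linarith [hzm.1, hzm.2]) hN'.le]
      linarith

lemma card_seg_le (N : ℕ) {i : ℕ} (him : i ≤ S.m) :
    (S.seg N i).card ≤ 2 * S.kIdx N i + 2 := by
  have hm := S.hm
  rcases Nat.eq_zero_or_pos i with rfl | hi1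
  · have hsub : S.seg N 0 ⊆ (Finset.range (S.kIdx N 0 + 1)).image
        (fun k : ℕ => S.z 1 - (k : ℝ) / N) := by
      intro x hx
      obtain ⟨k, hk, rfl⟩ := (S.mem_seg_zero_iff N x).mp hx
      exact Finset.mem_image.mpr ⟨k, Finset.mem_range.mpr (by omega), rfl⟩
    calc (S.seg N 0).card ≤ _ := Finset.card_le_card hsub
      _ ≤ (Finset.range (S.kIdx N 0 + 1)).card := Finset.card_image_le
      _ = S.kIdx N 0 + 1 := Finset.card_range _
      _ ≤ 2 * S.kIdx N 0 + 2 := by omega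
  · rcases Nat.lt_or_ge i S.m with hlt | hge
    · have hsub : S.seg N i ⊆ ((Finset.range (S.kIdx N i + 1)).image
          (fun k : ℕ => S.z i + (k : ℝ) / N))
          ∪ ((Finset.range (S.kIdx N i + 1)).image
          (fun k : ℕ => S.z (i + 1) - (k : ℝ) / N)) := by
        intro x hx
        rcases (S.mem_seg_mid_iff N hi1 hlt x).mp hx with ⟨k, _, hk, rfl⟩ | ⟨k, hk, rfl⟩
        · exact Finset.mem_union_left _
            (Finset.mem_image.mpr ⟨k, Finset.mem_range.mpr (by omega), rfl⟩)
        · exact Finset.mem_union_right _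
            (Finset.mem_image.mpr ⟨k, Finset.mem_range.mpr (by omega), rfl⟩)
      calc (S.seg N i).card ≤ _ := Finset.card_le_card hsub
        _ ≤ _ := Finset.card_union_le _ _
        _ ≤ (S.kIdx N i + 1) + (S.kIdx N i + 1) := by
            gcongr <;> exact le_trans Finset.card_image_le (le_of_eq (Finset.card_range _))
        _ ≤ 2 * S.kIdx N i + 2 := by omega
    · have : i = S.m := le_antisymm him hge
      subst this
      have hsub : S.seg N S.m ⊆ (Finset.range (S.kIdx N S.m + 1)).image
          (fun k : ℕ => S.z S.m + (k : ℝ) / N) := by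
        intro x hx
        obtain ⟨k, _, hk, rfl⟩ := (S.mem_seg_last_iff N x).mp hx
        exact Finset.mem_image.mpr ⟨k, Finset.mem_range.mpr (by omega), rfl⟩
      calc (S.seg N S.m).card ≤ _ := Finset.card_le_card hsub
        _ ≤ (Finset.range (S.kIdx N S.m + 1)).card := Finset.card_image_le
        _ = S.kIdx N S.m + 1 := Finset.card_range _
        _ ≤ 2 * S.kIdx N S.m + 2 := by omega

lemma card_E_le (N : ℕ) (hN : 1 ≤ N) :
    (S.E N).card ≤ (S.m + 1) * (2 * ⌈(N : ℝ) * (S.b - S.a)⌉₊ + 2) := by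
  calc (S.E N).card ≤ ∑ i ∈ Finset.range (S.m + 1), (S.seg N i).card := Finset.card_biUnion_le
    _ ≤ ∑ _i ∈ Finset.range (S.m + 1), (2 * ⌈(N : ℝ) * (S.b - S.a)⌉₊ + 2) := by
        apply Finset.sum_le_sum
        intro i hi
        rw [Finset.mem_range, Nat.lt_succ_iff] at hi
        calc (S.seg N i).card ≤ 2 * S.kIdx N i + 2 := S.card_seg_le N hi
          _ ≤ 2 * ⌈(N : ℝ) * (S.b - S.a)⌉₊ + 2 := by
              have := S.kIdx_le N hN hi
              omega
    _ = (S.m + 1) * (2 * ⌈(N : ℝ) * (S.b - S.a)⌉₊ + 2) := by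
        rw [Finset.sum_const, Finset.card_range, smul_eq_mul]

lemma psi_eq (L : ℕ) : ∑ k ∈ Finset.range (L + 1), ((k : ℝ)) ^ (-S.α)
    = ∑ u ∈ Finset.range L, ((u : ℝ) + 1) ^ (-S.α) := by
  rw [Finset.sum_range_succ']
  have h0 : ((0 : ℕ) : ℝ) ^ (-S.α) = 0 := by
    rw [Nat.cast_zero, Real.zero_rpow (by have := S.alpha_pos; intro h; simp at h; linarith)]
  rw [h0, add_zero]
  apply Finset.sum_congr rfl
  intro u _
  push_cast
  ring_nf

lemma sum_Ioc_le_tail (l M : ℕ) :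
    ∑ k ∈ Finset.Ioc l M, ((k : ℝ)) ^ (-S.α)
      ≤ (∑' k : ℕ, ((k : ℝ) + 1) ^ (-S.α)) - ∑ u ∈ Finset.range l, ((u : ℝ) + 1) ^ (-S.α) := by
  by_cases h : l ≤ M
  · have heq : Finset.Ioc l M = Finset.Ico (l + 1) (M + 1) := by
      ext k; simp only [Finset.mem_Ioc, Finset.mem_Ico]; omega
    rw [heq, Finset.sum_Ico_eq_sub _ (by omega : l + 1 ≤ M + 1), S.psi_eq M, S.psi_eq l]
    have := S.phi_le M
    linarith
  · rw [Finset.Ioc_eq_empty (by omega)]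
    simp only [Finset.sum_empty]
    have h1 := S.phi_le l
    linarith

lemma sum_Ioc_le_P (M : ℕ) :
    ∑ k ∈ Finset.Ioc 0 M, ((k : ℝ)) ^ (-S.α) ≤ ∑' k : ℕ, ((k : ℝ) + 1) ^ (-S.α) := by
  have := S.sum_Ioc_le_tail 0 M
  simp only [Finset.range_zero, Finset.sum_empty, sub_zero] at this
  exact this

lemma H_far_min {ε₂ : ℝ} (hε₂ : 0 < ε₂) :
    ∃ c : ℝ, 0 < c ∧ ∀ x ∈ Set.Icc S.a S.b,
      (∀ j, 1 ≤ j → j ≤ S.m → ε₂ ≤ |x - S.z j|) → c ≤ S.H x := by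
  set K : Set ℝ := Set.Icc S.a S.b ∩ ⋂ j ∈ Finset.Icc 1 S.m, {x : ℝ | ε₂ ≤ |x - S.z j|}
    with hK
  have hKclosed : IsClosed K := by
    apply IsClosed.inter isClosed_Icc
    apply isClosed_biInter
    intro j _
    have : {x : ℝ | ε₂ ≤ |x - S.z j|} = (fun x => |x - S.z j|) ⁻¹' Set.Ici ε₂ := rfl
    rw [this]
    exact IsClosed.preimage ((continuous_id.sub continuous_const).abs) isClosed_Ici
  have hKcomp : IsCompact K := isCompact_Icc.of_isClosed_subset hKclosed
    Set.inter_subset_left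
  have hmem : ∀ x ∈ Set.Icc S.a S.b, (∀ j, 1 ≤ j → j ≤ S.m → ε₂ ≤ |x - S.z j|) → x ∈ K := by
    intro x hx hsep
    refine ⟨hx, ?_⟩
    simp only [Set.mem_iInter]
    intro j hj
    obtain ⟨h1, h2⟩ := Finset.mem_Icc.mp hj
    exact hsep j h1 h2
  rcases Set.eq_empty_or_nonempty K with hKe | hKne
  · refine ⟨1, one_pos, ?_⟩
    intro x hx hsep
    exact absurd (hKe ▸ hmem x hx hsep) (Set.notMem_empty x)
  · obtain ⟨x₀, hx₀K, hx₀min⟩ := hKcomp.exists_isMinOn hKne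
      (S.hH_smooth.continuousOn.mono Set.inter_subset_left)
    refine ⟨S.H x₀, ?_, ?_⟩
    · rcases lt_or_eq_of_le (S.hH_nonneg x₀ hx₀K.1) with h | h
      · exact h
      · exfalso
        obtain ⟨i, hi, hxi⟩ := (S.hH_zero x₀ hx₀K.1).mp h.symm
        have := hx₀K.2
        simp only [Set.mem_iInter] at this
        have h2 := this i hi
        rw [hxi] at h2
        simp only [Set.mem_setOf_eq, sub_self, abs_zero] at h2
        linarith
    · intro x hx hsep
      exact hx₀min (hmem x hx hsep)

lemma nat_div_lt {k l N : ℕ} (hN : 1 ≤ N) (h : (k : ℝ) / N < (l : ℝ) / N) : k < l := by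
  by_contra h'
  exact absurd (div_le_div_nat (by omega : l ≤ k)) (not_le.mpr h)

/-- Sum of `num` over points of `E_N` in an annulus around `z j` is bounded by twice the
corresponding grid sum. -/
lemma zone_sum_le {ε : ℝ} (hε0 : 0 < ε)
    (hV : ∀ i, 1 ≤ i → i ≤ S.m → Set.Icc (S.z i - ε) (S.z i + ε) ⊆ S.V i)
    (hgap : ∀ i, 1 ≤ i → i < S.m → 4 * ε < S.z (i + 1) - S.z i)
    {r : ℝ} (hr0 : 0 ≤ r) (hrε : r ≤ ε)
    {N : ℕ} (hN : 1 ≤ N) {j : ℕ} (hj1 : 1 ≤ j) (hjm : j ≤ S.m) (low : ℕ) (s : Finset ℝ)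
    (hsub : ∀ x ∈ s, x ∈ S.E N ∧ (∀ i ∈ Finset.Icc 1 S.m, x ≠ S.z i) ∧ |x - S.z j| ≤ r ∧
      (low : ℝ) / N < |x - S.z j|) :
    ∑ x ∈ s, S.num N x
      ≤ 2 * ∑ k ∈ Finset.Ioc low ⌊r * N⌋₊, ((k : ℝ) / N) ^ (-S.αv j) := by
  have hN' : (0:ℝ) < N := div_cast_pos hN
  set M := ⌊r * N⌋₊ with hM
  set F : ℝ → ℝ := fun x => |x - S.z j| ^ (-S.αv j) with hF
  have hF0 : ∀ x, 0 ≤ F x := fun x => Real.rpow_nonneg (abs_nonneg _) _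
  have hstep1 : ∑ x ∈ s, S.num N x = ∑ x ∈ s, F x := by
    apply Finset.sum_congr rfl
    intro x hx
    obtain ⟨hxE, hxP, hxr, _⟩ := hsub x hx
    exact S.num_offgrid hε0 hV hgap hN hj1 hjm hxE (hxP j (Finset.mem_Icc.mpr ⟨hj1, hjm⟩))
      (le_trans hxr hrε)
  have hsubset : s ⊆ ((Finset.Ioc low M).image fun k : ℕ => S.z j - (k : ℝ) / N)
      ∪ ((Finset.Ioc low M).image fun k : ℕ => S.z j + (k : ℝ) / N) := by
    intro x hx
    obtain ⟨hxE, hxP, hxr, hxlow⟩ := hsub x hx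
    obtain ⟨k, hkr, hcase⟩ := S.E_structure hN hxE hj1 hjm hr0
      (fun i h1 h2 => by have := hgap i h1 h2; linarith) hxr
    have hkM : k ≤ M := Nat.le_floor (by
      rw [div_le_iff₀ hN'] at hkr
      linarith)
    rcases hcase with ⟨hxe, _⟩ | ⟨hxe, hk1, _⟩
    · have habs : |x - S.z j| = (k : ℝ) / N := by
        rw [hxe, show S.z j - (k : ℝ) / N - S.z j = -((k : ℝ) / N) by ring, abs_neg,
          abs_of_nonneg (by positivity)]
      have hklow : low < k := nat_div_lt hN (by rw [habs] at hxlow; exact hxlow)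
      exact Finset.mem_union_left _
        (Finset.mem_image.mpr ⟨k, Finset.mem_Ioc.mpr ⟨hklow, hkM⟩, hxe.symm⟩)
    · have habs : |x - S.z j| = (k : ℝ) / N := by
        rw [hxe, show S.z j + (k : ℝ) / N - S.z j = (k : ℝ) / N by ring,
          abs_of_nonneg (by positivity)]
      have hklow : low < k := nat_div_lt hN (by rw [habs] at hxlow; exact hxlow)
      exact Finset.mem_union_right _
        (Finset.mem_image.mpr ⟨k, Finset.mem_Ioc.mpr ⟨hklow, hkM⟩, hxe.symm⟩)
  have hdisj : Disjoint ((Finset.Ioc low M).image fun k : ℕ => S.z j - (k : ℝ) / N)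
      ((Finset.Ioc low M).image fun k : ℕ => S.z j + (k : ℝ) / N) := by
    rw [Finset.disjoint_left]
    intro x hxL hxR
    obtain ⟨u, hu, rfl⟩ := Finset.mem_image.mp hxL
    obtain ⟨v, hv, hveq⟩ := Finset.mem_image.mp hxR
    rw [Finset.mem_Ioc] at hu hv
    have h1 : (0:ℝ) < (u : ℝ) / N := by
      apply div_pos _ hN'
      exact_mod_cast Nat.lt_of_lt_of_le (Nat.zero_lt_succ _) (Nat.succ_le_of_lt hu.1)
    have h2 : (0:ℝ) ≤ (v : ℝ) / N := by positivity
    linarith [hveq]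
  have himgL : ∑ x ∈ (Finset.Ioc low M).image (fun k : ℕ => S.z j - (k : ℝ) / N), F x
      = ∑ k ∈ Finset.Ioc low M, ((k : ℝ) / N) ^ (-S.αv j) := by
    rw [Finset.sum_image (by
      intro u _ v _ h
      have h' : (u : ℝ) / N = (v : ℝ) / N := by
        have h2 : S.z j - (u : ℝ) / N = S.z j - (v : ℝ) / N := h
        linarith
      exact le_antisymm (nat_div_le hN h'.le) (nat_div_le hN h'.ge))]
    apply Finset.sum_congr rfl
    intro k _
    rw [hF]
    simp only
    rw [show S.z j - (k : ℝ) / N - S.z j = -((k : ℝ) / N) by ring, abs_neg,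
      abs_of_nonneg (by positivity)]
  have himgR : ∑ x ∈ (Finset.Ioc low M).image (fun k : ℕ => S.z j + (k : ℝ) / N), F x
      = ∑ k ∈ Finset.Ioc low M, ((k : ℝ) / N) ^ (-S.αv j) := by
    rw [Finset.sum_image (by
      intro u _ v _ h
      have h' : (u : ℝ) / N = (v : ℝ) / N := by
        have h2 : S.z j + (u : ℝ) / N = S.z j + (v : ℝ) / N := h
        linarith
      exact le_antisymm (nat_div_le hN h'.le) (nat_div_le hN h'.ge))]
    apply Finset.sum_congr rfl
    intro k _
    rw [hF]
    simp only
    rw [show S.z j + (k : ℝ) / N - S.z j = (k : ℝ) / N by ring,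
      abs_of_nonneg (by positivity)]
  calc ∑ x ∈ s, S.num N x = ∑ x ∈ s, F x := hstep1
    _ ≤ ∑ x ∈ _ ∪ _, F x := Finset.sum_le_sum_of_subset_of_nonneg hsubset
        (fun x _ _ => hF0 x)
    _ = _ + _ := Finset.sum_union hdisj
    _ = 2 * ∑ k ∈ Finset.Ioc low M, ((k : ℝ) / N) ^ (-S.αv j) := by
        rw [himgL, himgR]; ring
lemma max_zone_bound {ε : ℝ} (hε0 : 0 < ε)
    (hV : ∀ i, 1 ≤ i → i ≤ S.m → Set.Icc (S.z i - ε) (S.z i + ε) ⊆ S.V i)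
    (hgap : ∀ i, 1 ≤ i → i < S.m → 4 * ε < S.z (i + 1) - S.z i)
    {N : ℕ} (hN : 1 ≤ N) {j : ℕ} (hj1 : 1 ≤ j) (hjm : j ≤ S.m) (hαj : S.αv j = S.α)
    (low : ℕ) (s : Finset ℝ)
    (hsub : ∀ x ∈ s, x ∈ S.E N ∧ (∀ i ∈ Finset.Icc 1 S.m, x ≠ S.z i) ∧ |x - S.z j| ≤ ε ∧
      (low : ℝ) / N < |x - S.z j|) :
    ∑ x ∈ s, S.num N x ≤ 2 * (N : ℝ) ^ S.α *
      ((∑' k : ℕ, ((k : ℝ) + 1) ^ (-S.α)) - ∑ u ∈ Finset.range low, ((u : ℝ) + 1) ^ (-S.α)) := by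
  have hN' : (0:ℝ) < N := div_cast_pos hN
  have hNα : (0:ℝ) < (N : ℝ) ^ S.α := Real.rpow_pos_of_pos hN' _
  calc ∑ x ∈ s, S.num N x
      ≤ 2 * ∑ k ∈ Finset.Ioc low ⌊ε * N⌋₊, ((k : ℝ) / N) ^ (-S.αv j) :=
        S.zone_sum_le hε0 hV hgap hε0.le le_rfl hN hj1 hjm low s hsub
    _ = 2 * ((N : ℝ) ^ S.α * ∑ k ∈ Finset.Ioc low ⌊ε * N⌋₊, ((k : ℝ)) ^ (-S.α)) := by
        have hsums : ∑ k ∈ Finset.Ioc low ⌊ε * N⌋₊, ((k : ℝ) / N) ^ (-S.αv j)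
            = ∑ k ∈ Finset.Ioc low ⌊ε * N⌋₊, (N : ℝ) ^ S.α * ((k : ℝ)) ^ (-S.α) := by
          apply Finset.sum_congr rfl
          intro k hk
          have hk1 : 1 ≤ k := by
            have := (Finset.mem_Ioc.mp hk).1; omega
          rw [hαj, div_rpow_neg (by exact_mod_cast hk1 : (0:ℝ) < (k:ℝ)) hN]
        rw [hsums, ← Finset.mul_sum]
    _ ≤ _ := by
        have := S.sum_Ioc_le_tail low ⌊ε * N⌋₊
        nlinarith [hNα]

set_option maxHeartbeats 800000 in
lemma small_zone_bound {ε : ℝ} (hε0 : 0 < ε)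
    (hV : ∀ i, 1 ≤ i → i ≤ S.m → Set.Icc (S.z i - ε) (S.z i + ε) ⊆ S.V i)
    (hgap : ∀ i, 1 ≤ i → i < S.m → 4 * ε < S.z (i + 1) - S.z i)
    {ε₂ : ℝ} (hε₂0 : 0 < ε₂) (hε₂ε : ε₂ ≤ ε)
    {N : ℕ} (hN : 1 ≤ N) {j : ℕ} (hj1 : 1 ≤ j) (hjm : j ≤ S.m)
    (s : Finset ℝ)
    (hsub : ∀ x ∈ s, x ∈ S.E N ∧ (∀ i ∈ Finset.Icc 1 S.m, x ≠ S.z i) ∧ |x - S.z j| ≤ ε₂ ∧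
      ((0 : ℕ) : ℝ) / N < |x - S.z j|) :
    ∑ x ∈ s, S.num N x ≤ 2 * ε₂ ^ (S.α - S.αv j) * (N : ℝ) ^ S.α *
      (∑' k : ℕ, ((k : ℝ) + 1) ^ (-S.α)) := by
  have hN' : (0:ℝ) < N := div_cast_pos hN
  have hNα : (0:ℝ) < (N : ℝ) ^ S.α := Real.rpow_pos_of_pos hN' _
  have hαj : S.αv j ≤ S.α := S.hα_max j (Finset.mem_Icc.mpr ⟨hj1, hjm⟩)
  calc ∑ x ∈ s, S.num N x
      ≤ 2 * ∑ k ∈ Finset.Ioc 0 ⌊ε₂ * N⌋₊, ((k : ℝ) / N) ^ (-S.αv j) :=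
        S.zone_sum_le hε0 hV hgap hε₂0.le hε₂ε hN hj1 hjm 0 s hsub
    _ ≤ 2 * ∑ k ∈ Finset.Ioc 0 ⌊ε₂ * N⌋₊,
          (ε₂ ^ (S.α - S.αv j) * ((N : ℝ) ^ S.α * ((k : ℝ)) ^ (-S.α))) := by
        apply mul_le_mul_of_nonneg_left _ (by norm_num)
        apply Finset.sum_le_sum
        intro k hk
        rw [Finset.mem_Ioc] at hk
        have hk1 : 1 ≤ k := hk.1
        have hkpos : (0:ℝ) < (k : ℝ) := by exact_mod_cast hk1
        have htpos : (0:ℝ) < (k : ℝ) / N := by positivity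
        have hkε₂ : (k : ℝ) / N ≤ ε₂ := by
          rw [div_le_iff₀ hN']
          calc (k : ℝ) ≤ (⌊ε₂ * N⌋₊ : ℝ) := by exact_mod_cast hk.2
            _ ≤ ε₂ * N := Nat.floor_le (by positivity)
        have hsplit : ((k : ℝ) / N) ^ (-S.αv j)
            = ((k : ℝ) / N) ^ (S.α - S.αv j) * ((k : ℝ) / N) ^ (-S.α) := by
          rw [← Real.rpow_add htpos]
          congr 1
          ring
        rw [hsplit, div_rpow_neg hkpos hN]
        apply mul_le_mul_of_nonneg_right _ (by positivity)
        exact Real.rpow_le_rpow htpos.le hkε₂ (by linarith)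
    _ = 2 * ε₂ ^ (S.α - S.αv j) * (N : ℝ) ^ S.α *
          ∑ k ∈ Finset.Ioc 0 ⌊ε₂ * N⌋₊, ((k : ℝ)) ^ (-S.α) := by
        rw [← Finset.mul_sum, ← Finset.mul_sum]
        ring
    _ ≤ _ := by
        have := S.sum_Ioc_le_P ⌊ε₂ * N⌋₊
        have h2 : (0:ℝ) ≤ 2 * ε₂ ^ (S.α - S.αv j) * (N : ℝ) ^ S.α := by positivity
        nlinarith

set_option maxHeartbeats 2000000 in
lemma deltaSum_tendsto {ε : ℝ} (hε0 : 0 < ε)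
    (hV : ∀ i, 1 ≤ i → i ≤ S.m → Set.Icc (S.z i - ε) (S.z i + ε) ⊆ S.V i)
    (hgap : ∀ i, 1 ≤ i → i < S.m → 4 * ε < S.z (i + 1) - S.z i)
    (κ : ℕ) (β : ℕ → ℕ) (hβ : S.BEnum κ β) (ℓ : ℕ → ℕ)
    (hℓ_inf : Tendsto (fun N => (ℓ N : ℝ)) atTop atTop)
    (hℓ_o : Tendsto (fun N => (ℓ N : ℝ) / N) atTop (𝓝 0)) :
    Tendsto (fun N => (∑ x ∈ S.E N \ (Finset.Icc 1 κ).biUnion (fun i => S.metaSet β ℓ N i),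
      S.num N x) / (N : ℝ) ^ S.α) atTop (𝓝 0) := by
  have hℓnat : Tendsto ℓ atTop atTop := tendsto_natCast_atTop_iff.mp hℓ_inf
  have hcomp : Tendsto (fun N => ∑ u ∈ Finset.range (ℓ N), ((u : ℝ) + 1) ^ (-S.α)) atTop
      (𝓝 (∑' k : ℕ, ((k : ℝ) + 1) ^ (-S.α))) := S.phi_tendsto.comp hℓnat
  rw [NormedAddCommGroup.tendsto_nhds_zero]
  intro ε' hε'
  set P : ℝ := ∑' k : ℕ, ((k : ℝ) + 1) ^ (-S.α) with hPdef
  have hP0 : 0 ≤ P := tsum_nonneg (fun k => by positivity)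
  set δ₀ : ℝ := ε' / (8 * ((S.m : ℝ) + 1) * (P + 1)) with hδ₀def
  have hδ₀0 : 0 < δ₀ := by
    apply div_pos hε'
    positivity
  set smallset := (Finset.Icc 1 S.m).filter (fun j => S.αv j < S.α) with hssdef
  set maxset := (Finset.Icc 1 S.m).filter (fun j => S.αv j = S.α) with hmsdef
  set t : ℕ → ℝ := fun j => min (min ε 1) (δ₀ ^ (S.α - S.αv j)⁻¹ / 2) with htdef
  have ht0 : ∀ j, 0 < t j := fun j => lt_min (lt_min hε0 one_pos) (by positivity)
  set ε₂ : ℝ := if h : smallset.Nonempty then min (min ε 1) (smallset.inf' h t)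
    else min ε 1 with hε₂def
  have hε₂0 : 0 < ε₂ := by
    rw [hε₂def]; split
    · exact lt_min (lt_min hε0 one_pos) ((Finset.lt_inf'_iff _).mpr (fun j _ => ht0 j))
    · exact lt_min hε0 one_pos
  have hε₂ε : ε₂ ≤ ε := by
    rw [hε₂def]; split
    · exact le_trans (min_le_left _ _) (min_le_left _ _)
    · exact min_le_left _ _
  have hε₂small : ∀ j ∈ smallset, ε₂ ^ (S.α - S.αv j) ≤ δ₀ := by
    intro j hj
    have hjlt : S.αv j < S.α := (Finset.mem_filter.mp hj).2
    have he : 0 < S.α - S.αv j := by linarith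
    have h1 : ε₂ ≤ t j := by
      rw [hε₂def, dif_pos ⟨j, hj⟩]
      exact le_trans (min_le_right _ _) (Finset.inf'_le t hj)
    have h2 : t j ≤ δ₀ ^ (S.α - S.αv j)⁻¹ := by
      apply le_trans (min_le_right _ _)
      have : (0:ℝ) < δ₀ ^ (S.α - S.αv j)⁻¹ := by positivity
      linarith
    calc ε₂ ^ (S.α - S.αv j) ≤ (δ₀ ^ (S.α - S.αv j)⁻¹) ^ (S.α - S.αv j) :=
        Real.rpow_le_rpow hε₂0.le (le_trans h1 h2) he.le
      _ = δ₀ := by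
        rw [← Real.rpow_mul hδ₀0.le, inv_mul_cancel₀ he.ne', Real.rpow_one]
  obtain ⟨c, hc0, hcH⟩ := S.H_far_min hε₂0
  -- the three vanishing parts
  set atomterm : ℕ → ℝ := fun N => ∑ j ∈ smallset, (N : ℝ) ^ (S.αv j - S.α) with hatomdef
  set maxterm : ℕ → ℝ := fun N =>
    2 * (S.m : ℝ) * (P - ∑ u ∈ Finset.range (ℓ N), ((u : ℝ) + 1) ^ (-S.α)) with hmaxdef
  set farterm : ℕ → ℝ := fun N =>
    c⁻¹ * (((S.m : ℝ) + 1) * (2 * (⌈(N : ℝ) * (S.b - S.a)⌉₊ : ℝ) + 2)) / (N : ℝ) ^ S.α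
    with hfardef
  have hatom0 : Tendsto atomterm atTop (𝓝 0) := by
    rw [hatomdef]
    have : Tendsto (fun N : ℕ => ∑ j ∈ smallset, (N : ℝ) ^ (S.αv j - S.α)) atTop
        (𝓝 (∑ j ∈ smallset, (0:ℝ))) := by
      apply tendsto_finset_sum
      intro j hj
      have hjlt : S.αv j < S.α := (Finset.mem_filter.mp hj).2
      have h1 : Tendsto (fun x : ℝ => x ^ (-(S.α - S.αv j))) atTop (𝓝 0) :=
        tendsto_rpow_neg_atTop (by linarith)
      have h2 := h1.comp tendsto_natCast_atTop_atTop
      apply h2.congr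
      intro N
      simp only [Function.comp_apply]
      rw [neg_sub]
    simpa using this
  have hmax0 : Tendsto maxterm atTop (𝓝 0) := by
    rw [hmaxdef]
    have h1 : Tendsto (fun N => P - ∑ u ∈ Finset.range (ℓ N), ((u : ℝ) + 1) ^ (-S.α)) atTop
        (𝓝 (P - P)) := tendsto_const_nhds.sub hcomp
    rw [sub_self] at h1
    have := h1.const_mul (2 * (S.m : ℝ))
    simpa using this
  have hfar0 : Tendsto farterm atTop (𝓝 0) := by
    apply squeeze_zero' (Filter.Eventually.of_forall (fun N => by
      rw [hfardef]
      positivity))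
      (g := fun N : ℕ => (c⁻¹ * (((S.m : ℝ) + 1) * (2 * (S.b - S.a) + 4))) * (N : ℝ) ^ ((1:ℝ) - S.α))
    · filter_upwards [Filter.eventually_ge_atTop 1] with N hN
      have hN' : (0:ℝ) < N := div_cast_pos hN
      have hNα : (0:ℝ) < (N : ℝ) ^ S.α := Real.rpow_pos_of_pos hN' _
      rw [hfardef]
      have hba' : (0:ℝ) ≤ S.b - S.a := by linarith [S.hab]
      have hceil : (⌈(N : ℝ) * (S.b - S.a)⌉₊ : ℝ) ≤ (N : ℝ) * (S.b - S.a) + 1 :=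
        le_of_lt (Nat.ceil_lt_add_one (mul_nonneg hN'.le hba'))
      have hNone : (1:ℝ) ≤ (N:ℝ) := by exact_mod_cast hN
      have hpow : (N : ℝ) ^ ((1:ℝ) - S.α) = (N:ℝ) / (N : ℝ) ^ S.α := by
        rw [Real.rpow_sub hN', Real.rpow_one]
      have hbound : 2 * (⌈(N : ℝ) * (S.b - S.a)⌉₊ : ℝ) + 2 ≤ (2 * (S.b - S.a) + 4) * N := by
        nlinarith
      have hc' : (0:ℝ) ≤ c⁻¹ := by positivity
      have hm0 : (0:ℝ) ≤ (S.m:ℝ) + 1 := by positivity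
      calc c⁻¹ * (((S.m : ℝ) + 1) * (2 * (⌈(N : ℝ) * (S.b - S.a)⌉₊ : ℝ) + 2)) / (N : ℝ) ^ S.α
          ≤ c⁻¹ * (((S.m : ℝ) + 1) * ((2 * (S.b - S.a) + 4) * N)) / (N : ℝ) ^ S.α := by
            gcongr c⁻¹ * (((S.m : ℝ) + 1) * ?_) / (N : ℝ) ^ S.α
        _ = (c⁻¹ * (((S.m : ℝ) + 1) * (2 * (S.b - S.a) + 4))) * ((N:ℝ) / (N : ℝ) ^ S.α) := by
            ring
        _ = (c⁻¹ * (((S.m : ℝ) + 1) * (2 * (S.b - S.a) + 4))) * (N : ℝ) ^ ((1:ℝ) - S.α) := by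
            rw [hpow]
    · have h1 : Tendsto (fun x : ℝ => x ^ ((1:ℝ) - S.α)) atTop (𝓝 0) := by
        have := tendsto_rpow_neg_atTop (show (0:ℝ) < S.α - 1 by linarith [S.hα_one])
        apply this.congr
        intro x
        congr 1
        ring
      have h2 := h1.comp tendsto_natCast_atTop_atTop
      have := h2.const_mul (c⁻¹ * (((S.m : ℝ) + 1) * (2 * (S.b - S.a) + 4)))
      simpa using this
  have hg0 : Tendsto (fun N => atomterm N + maxterm N + farterm N) atTop (𝓝 0) := by
    have := (hatom0.add hmax0).add hfar0
    simpa using this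
  -- eventual smallness of the vanishing part
  have hgev : ∀ᶠ N : ℕ in atTop, atomterm N + maxterm N + farterm N < ε' / 2 := by
    have h1 := hg0 (Metric.ball_mem_nhds 0 (by linarith : (0:ℝ) < ε' / 2))
    filter_upwards [h1] with N hN
    simp only [Set.mem_preimage, Metric.mem_ball, Real.dist_eq, sub_zero] at hN
    exact lt_of_abs_lt hN
  filter_upwards [Filter.eventually_ge_atTop 1, hgev] with N hN hsmall
  have hN' : (0:ℝ) < N := div_cast_pos hN
  have hNα : (0:ℝ) < (N : ℝ) ^ S.α := Real.rpow_pos_of_pos hN' _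
  set D := S.E N \ (Finset.Icc 1 κ).biUnion (fun i => S.metaSet β ℓ N i) with hDdef
  have hDE : ∀ x ∈ D, x ∈ S.E N := fun x hx => (Finset.mem_sdiff.mp hx).1
  have hDnotmeta : ∀ x ∈ D, ∀ i ∈ Finset.Icc 1 κ, x ∉ S.metaSet β ℓ N i := by
    intro x hx i hi hmem
    exact (Finset.mem_sdiff.mp hx).2 (Finset.mem_biUnion.mpr ⟨i, hi, hmem⟩)
  have hnonneg : 0 ≤ ∑ x ∈ D, S.num N x :=
    Finset.sum_nonneg fun x hx => S.num_nonneg hN (hDE x hx)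
  set Pnz : ℝ → Prop := fun x => ∀ i ∈ Finset.Icc 1 S.m, x ≠ S.z i with hPnzdef
  set NM : ℝ → Prop := fun x => ∃ j ∈ Finset.Icc 1 S.m, S.αv j = S.α ∧ |x - S.z j| ≤ ε
    with hNMdef
  set NS : ℝ → Prop := fun x => ∃ j ∈ Finset.Icc 1 S.m, S.αv j < S.α ∧ |x - S.z j| ≤ ε₂
    with hNSdef
  have hsplit1 := Finset.sum_filter_add_sum_filter_not D Pnz (S.num N)
  have hsplit2 := Finset.sum_filter_add_sum_filter_not (D.filter Pnz) NM (S.num N)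
  have hsplit3 := Finset.sum_filter_add_sum_filter_not
    ((D.filter Pnz).filter (fun x => ¬ NM x)) NS (S.num N)
  -- (1) atoms
  have hatoms : ∑ x ∈ D.filter (fun x => ¬ Pnz x), S.num N x
      ≤ (N:ℝ) ^ S.α * atomterm N := by
    have hsub : D.filter (fun x => ¬ Pnz x) ⊆ smallset.image S.z := by
      intro x hx
      rw [Finset.mem_filter] at hx
      obtain ⟨hxD, hxa⟩ := hx
      simp only [hPnzdef] at hxa
      push_neg at hxa
      obtain ⟨i, hi, hxi⟩ := hxa
      have hile : S.αv i ≤ S.α := S.hα_max i hi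
      rcases lt_or_eq_of_le hile with hlt | heq
      · exact Finset.mem_image.mpr ⟨i, Finset.mem_filter.mpr ⟨hi, hlt⟩, hxi.symm⟩
      · exfalso
        obtain ⟨i', hi', hβi'⟩ := hβ.surj i hi heq
        apply hDnotmeta x hxD i' hi'
        simp only [metaSet, Finset.mem_filter]
        have h0 : (0:ℝ) ≤ (ℓ N : ℝ) / N := by positivity
        rw [hβi']
        exact ⟨hDE x hxD, by rw [hxi]; linarith, by rw [hxi]; linarith⟩
    calc ∑ x ∈ D.filter (fun x => ¬ Pnz x), S.num N x
        ≤ ∑ x ∈ smallset.image S.z, S.num N x :=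
          Finset.sum_le_sum_of_subset_of_nonneg hsub (fun x hxim _ => by
            obtain ⟨j, hj, rfl⟩ := Finset.mem_image.mp hxim
            obtain ⟨hj1, hjm⟩ := Finset.mem_Icc.mp (Finset.mem_filter.mp hj).1
            exact S.num_nonneg hN (S.z_mem_E N hj1 hjm))
      _ = ∑ j ∈ smallset, S.num N (S.z j) := Finset.sum_image (by
            intro u hu v hv h
            obtain ⟨hu1, hum⟩ := Finset.mem_Icc.mp (Finset.mem_filter.mp hu).1
            obtain ⟨hv1, hvm⟩ := Finset.mem_Icc.mp (Finset.mem_filter.mp hv).1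
            exact S.z_inj hu1 hum hv1 hvm h)
      _ = ∑ j ∈ smallset, (N:ℝ) ^ S.αv j := Finset.sum_congr rfl (fun j hj => by
            obtain ⟨hj1, hjm⟩ := Finset.mem_Icc.mp (Finset.mem_filter.mp hj).1
            exact S.num_z N hj1 hjm)
      _ = (N:ℝ) ^ S.α * atomterm N := by
          rw [hatomdef, Finset.mul_sum]
          apply Finset.sum_congr rfl
          intro j _
          rw [← Real.rpow_add hN']
          congr 1
          ring
  -- (2) near-max zones
  have hmaxsum : ∑ x ∈ (D.filter Pnz).filter NM, S.num N x ≤ (N:ℝ) ^ S.α * maxterm N := by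
    set s1 := (D.filter Pnz).filter NM with hs1def
    have hs1E : ∀ x ∈ s1, x ∈ S.E N := fun x hx =>
      hDE x (Finset.mem_of_mem_filter x (Finset.mem_of_mem_filter x hx))
    have hsub : s1 ⊆ maxset.biUnion (fun j => s1.filter (fun x => |x - S.z j| ≤ ε)) := by
      intro x hx
      have hx' := (Finset.mem_filter.mp hx).2
      simp only [hNMdef] at hx'
      obtain ⟨j, hjIcc, hjα, hjε⟩ := hx'
      exact Finset.mem_biUnion.mpr ⟨j, Finset.mem_filter.mpr ⟨hjIcc, hjα⟩,
        Finset.mem_filter.mpr ⟨hx, hjε⟩⟩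
    have hdisj : (maxset : Set ℕ).PairwiseDisjoint
        (fun j => s1.filter (fun x => |x - S.z j| ≤ ε)) := by
      intro j hj j' hj' hne
      simp only [Finset.coe_filter, Finset.mem_coe] at hj hj'
      have hjIcc := (Finset.mem_filter.mp hj).1
      have hj'Icc := (Finset.mem_filter.mp hj').1
      obtain ⟨hj1, hjm⟩ := Finset.mem_Icc.mp hjIcc
      obtain ⟨hj'1, hj'm⟩ := Finset.mem_Icc.mp hj'Icc
      apply Finset.disjoint_left.mpr
      intro x hx hx'
      have h1 : |x - S.z j| ≤ ε := (Finset.mem_filter.mp hx).2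
      have h2 : |x - S.z j'| ≤ ε := (Finset.mem_filter.mp hx').2
      rcases Nat.lt_or_ge j j' with hlt | hge
      · have := S.z_sep hgap hj1 hlt hj'm
        rw [abs_sub_le_iff] at h1 h2
        linarith [h1.1, h1.2, h2.1, h2.2]
      · have hlt : j' < j := by omega
        have := S.z_sep hgap hj'1 hlt hjm
        rw [abs_sub_le_iff] at h1 h2
        linarith [h1.1, h1.2, h2.1, h2.2]
    have htail0 : 0 ≤ P - ∑ u ∈ Finset.range (ℓ N), ((u : ℝ) + 1) ^ (-S.α) := by
      have := S.phi_le (ℓ N); linarith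
    calc ∑ x ∈ s1, S.num N x
        ≤ ∑ x ∈ maxset.biUnion (fun j => s1.filter (fun x => |x - S.z j| ≤ ε)),
            S.num N x := by
          apply Finset.sum_le_sum_of_subset_of_nonneg hsub
          intro x hx _
          obtain ⟨j, _, hxj⟩ := Finset.mem_biUnion.mp hx
          exact S.num_nonneg hN (hs1E x (Finset.mem_of_mem_filter x hxj))
      _ = ∑ j ∈ maxset, ∑ x ∈ s1.filter (fun x => |x - S.z j| ≤ ε), S.num N x :=
          Finset.sum_biUnion hdisj
      _ ≤ ∑ _j ∈ maxset, 2 * (N:ℝ) ^ S.α *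
            (P - ∑ u ∈ Finset.range (ℓ N), ((u : ℝ) + 1) ^ (-S.α)) := by
          apply Finset.sum_le_sum
          intro j hj
          obtain ⟨hjIcc, hjα⟩ := Finset.mem_filter.mp hj
          obtain ⟨hj1, hjm⟩ := Finset.mem_Icc.mp hjIcc
          apply S.max_zone_bound hε0 hV hgap hN hj1 hjm hjα (ℓ N)
          intro x hx
          have hx1 : x ∈ s1 := Finset.mem_of_mem_filter x hx
          have hxPnz : Pnz x := (Finset.mem_filter.mp (Finset.mem_of_mem_filter x hx1)).2
          have hxD : x ∈ D := Finset.mem_of_mem_filter x (Finset.mem_of_mem_filter x hx1)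
          have hxε : |x - S.z j| ≤ ε := (Finset.mem_filter.mp hx).2
          refine ⟨hDE x hxD, hxPnz, hxε, ?_⟩
          obtain ⟨i', hi', hβi'⟩ := hβ.surj j hjIcc hjα
          have hnm := hDnotmeta x hxD i' hi'
          by_contra hcon
          push_neg at hcon
          apply hnm
          simp only [metaSet, Finset.mem_filter]
          rw [hβi']
          rw [abs_sub_le_iff] at hcon
          exact ⟨hDE x hxD, by linarith [hcon.1, hcon.2], by linarith [hcon.1, hcon.2]⟩
      _ = (maxset.card : ℝ) * (2 * (N:ℝ) ^ S.α *
            (P - ∑ u ∈ Finset.range (ℓ N), ((u : ℝ) + 1) ^ (-S.α))) := by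
          rw [Finset.sum_const, nsmul_eq_mul]
      _ ≤ (S.m : ℝ) * (2 * (N:ℝ) ^ S.α *
            (P - ∑ u ∈ Finset.range (ℓ N), ((u : ℝ) + 1) ^ (-S.α))) := by
          apply mul_le_mul_of_nonneg_right _ (by positivity)
          have h1 : maxset.card ≤ (Finset.Icc 1 S.m).card := Finset.card_filter_le _ _
          have h2 : (Finset.Icc 1 S.m).card = S.m := by rw [Nat.card_Icc]; omega
          exact_mod_cast h1.trans_eq h2
      _ = (N:ℝ) ^ S.α * maxterm N := by rw [hmaxdef]; ring
  -- (3) near-small zones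
  have hsmallsum : ∑ x ∈ ((D.filter Pnz).filter (fun x => ¬ NM x)).filter NS, S.num N x
      ≤ (N:ℝ) ^ S.α * (ε' / 4) := by
    set s2 := ((D.filter Pnz).filter (fun x => ¬ NM x)).filter NS with hs2def
    have hs2E : ∀ x ∈ s2, x ∈ S.E N := fun x hx =>
      hDE x (Finset.mem_of_mem_filter x (Finset.mem_of_mem_filter x
        (Finset.mem_of_mem_filter x hx)))
    have hs2P : ∀ x ∈ s2, Pnz x := fun x hx =>
      (Finset.mem_filter.mp (Finset.mem_of_mem_filter x (Finset.mem_of_mem_filter x hx))).2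
    have hsub : s2 ⊆ smallset.biUnion (fun j => s2.filter (fun x => |x - S.z j| ≤ ε₂)) := by
      intro x hx
      have hx' := (Finset.mem_filter.mp hx).2
      simp only [hNSdef] at hx'
      obtain ⟨j, hjIcc, hjα, hjε⟩ := hx'
      exact Finset.mem_biUnion.mpr ⟨j, Finset.mem_filter.mpr ⟨hjIcc, hjα⟩,
        Finset.mem_filter.mpr ⟨hx, hjε⟩⟩
    have hdisj : (smallset : Set ℕ).PairwiseDisjoint
        (fun j => s2.filter (fun x => |x - S.z j| ≤ ε₂)) := by
      intro j hj j' hj' hne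
      simp only [Finset.mem_coe] at hj hj'
      have hjIcc := (Finset.mem_filter.mp hj).1
      have hj'Icc := (Finset.mem_filter.mp hj').1
      obtain ⟨hj1, hjm⟩ := Finset.mem_Icc.mp hjIcc
      obtain ⟨hj'1, hj'm⟩ := Finset.mem_Icc.mp hj'Icc
      apply Finset.disjoint_left.mpr
      intro x hx hx'
      have h1 : |x - S.z j| ≤ ε₂ := (Finset.mem_filter.mp hx).2
      have h2 : |x - S.z j'| ≤ ε₂ := (Finset.mem_filter.mp hx').2
      rcases Nat.lt_or_ge j j' with hlt | hge
      · have := S.z_sep hgap hj1 hlt hj'm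
        rw [abs_sub_le_iff] at h1 h2
        linarith [h1.1, h1.2, h2.1, h2.2]
      · have hlt : j' < j := by omega
        have := S.z_sep hgap hj'1 hlt hjm
        rw [abs_sub_le_iff] at h1 h2
        linarith [h1.1, h1.2, h2.1, h2.2]
    have hkey : 2 * (S.m : ℝ) * P * δ₀ ≤ ε' / 4 := by
      rw [hδ₀def, ← mul_div_assoc]
      rw [div_le_div_iff₀ (by positivity) (by norm_num : (0:ℝ) < 4)]
      nlinarith [hP0, hε'.le, Nat.cast_nonneg (α := ℝ) S.m,
        mul_le_mul_of_nonneg_right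
          (show (S.m:ℝ) * P ≤ ((S.m:ℝ) + 1) * (P + 1) by
            nlinarith [hP0, Nat.cast_nonneg (α := ℝ) S.m]) hε'.le]
    calc ∑ x ∈ s2, S.num N x
        ≤ ∑ x ∈ smallset.biUnion (fun j => s2.filter (fun x => |x - S.z j| ≤ ε₂)),
            S.num N x := by
          apply Finset.sum_le_sum_of_subset_of_nonneg hsub
          intro x hx _
          obtain ⟨j, _, hxj⟩ := Finset.mem_biUnion.mp hx
          exact S.num_nonneg hN (hs2E x (Finset.mem_of_mem_filter x hxj))
      _ = ∑ j ∈ smallset, ∑ x ∈ s2.filter (fun x => |x - S.z j| ≤ ε₂), S.num N x :=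
          Finset.sum_biUnion hdisj
      _ ≤ ∑ j ∈ smallset, 2 * δ₀ * (N:ℝ) ^ S.α * P := by
          apply Finset.sum_le_sum
          intro j hj
          have hjIcc := (Finset.mem_filter.mp hj).1
          obtain ⟨hj1, hjm⟩ := Finset.mem_Icc.mp hjIcc
          have hz := S.small_zone_bound hε0 hV hgap hε₂0 hε₂ε hN hj1 hjm
            (s2.filter (fun x => |x - S.z j| ≤ ε₂)) (by
              intro x hx
              have hxs2 : x ∈ s2 := Finset.mem_of_mem_filter x hx
              have hxε : |x - S.z j| ≤ ε₂ := (Finset.mem_filter.mp hx).2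
              refine ⟨hs2E x hxs2, hs2P x hxs2, hxε, ?_⟩
              rw [Nat.cast_zero, zero_div, abs_pos]
              exact sub_ne_zero_of_ne (hs2P x hxs2 j hjIcc))
          apply le_trans hz
          have h1 : ε₂ ^ (S.α - S.αv j) ≤ δ₀ := hε₂small j hj
          nlinarith [mul_le_mul_of_nonneg_right h1 (mul_nonneg hNα.le hP0), hP0, hNα]
      _ = (smallset.card : ℝ) * (2 * δ₀ * (N:ℝ) ^ S.α * P) := by
          rw [Finset.sum_const, nsmul_eq_mul]
      _ ≤ (S.m : ℝ) * (2 * δ₀ * (N:ℝ) ^ S.α * P) := by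
          apply mul_le_mul_of_nonneg_right _ (by positivity)
          have h1 : smallset.card ≤ (Finset.Icc 1 S.m).card := Finset.card_filter_le _ _
          have h2 : (Finset.Icc 1 S.m).card = S.m := by rw [Nat.card_Icc]; omega
          exact_mod_cast h1.trans_eq h2
      _ ≤ (N:ℝ) ^ S.α * (ε' / 4) := by nlinarith [hkey, hNα]
  -- (4) far points
  have hfarsum : ∑ x ∈ ((D.filter Pnz).filter (fun x => ¬ NM x)).filter (fun x => ¬ NS x),
      S.num N x ≤ (N:ℝ) ^ S.α * farterm N := by
    set sf := ((D.filter Pnz).filter (fun x => ¬ NM x)).filter (fun x => ¬ NS x) with hsfdef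
    have hsfD : ∀ x ∈ sf, x ∈ D := fun x hx =>
      Finset.mem_of_mem_filter x (Finset.mem_of_mem_filter x (Finset.mem_of_mem_filter x hx))
    have hbound : ∀ x ∈ sf, S.num N x ≤ c⁻¹ := by
      intro x hx
      have hxD := hsfD x hx
      have hxPnz : Pnz x :=
        (Finset.mem_filter.mp (Finset.mem_of_mem_filter x
          (Finset.mem_of_mem_filter x hx))).2
      have hnotNS : ¬ NS x := (Finset.mem_filter.mp hx).2
      have hnotNM : ¬ NM x := (Finset.mem_filter.mp (Finset.mem_of_mem_filter x hx)).2
      have hxIcc := S.mem_E_Icc hN (hDE x hxD)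
      simp only [hNSdef] at hnotNS
      simp only [hNMdef] at hnotNM
      have hsep : ∀ j, 1 ≤ j → j ≤ S.m → ε₂ ≤ |x - S.z j| := by
        intro j hj1 hjm
        have hjIcc : j ∈ Finset.Icc 1 S.m := Finset.mem_Icc.mpr ⟨hj1, hjm⟩
        rcases lt_or_eq_of_le (S.hα_max j hjIcc) with hlt | heq
        · by_contra hcon
          push_neg at hcon
          exact hnotNS ⟨j, hjIcc, hlt, le_of_lt hcon⟩
        · by_contra hcon
          push_neg at hcon
          exact hnotNM ⟨j, hjIcc, heq, le_trans (le_of_lt hcon) hε₂ε⟩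
      have hH := hcH x hxIcc hsep
      rw [S.num_ne N hxPnz]
      exact inv_anti₀ hc0 hH
    calc ∑ x ∈ sf, S.num N x ≤ sf.card • c⁻¹ := Finset.sum_le_card_nsmul sf _ c⁻¹ hbound
      _ = (sf.card : ℝ) * c⁻¹ := nsmul_eq_mul _ _
      _ ≤ (((S.m : ℝ) + 1) * (2 * (⌈(N : ℝ) * (S.b - S.a)⌉₊ : ℝ) + 2)) * c⁻¹ := by
          apply mul_le_mul_of_nonneg_right _ (by positivity)
          have h1 : sf.card ≤ (S.E N).card := by
            apply Finset.card_le_card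
            intro x hx
            exact hDE x (hsfD x hx)
          have h2 := S.card_E_le N hN
          have h3 : (sf.card : ℝ) ≤ ((S.m + 1) * (2 * ⌈(N : ℝ) * (S.b - S.a)⌉₊ + 2) : ℕ) := by
            exact_mod_cast h1.trans h2
          calc (sf.card : ℝ) ≤ _ := h3
            _ = ((S.m : ℝ) + 1) * (2 * (⌈(N : ℝ) * (S.b - S.a)⌉₊ : ℝ) + 2) := by push_cast; ring
      _ = (N:ℝ) ^ S.α * farterm N := by
          rw [hfardef]
          field_simp
  calc ‖(∑ x ∈ D, S.num N x) / (N : ℝ) ^ S.α‖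
      = (∑ x ∈ D, S.num N x) / (N : ℝ) ^ S.α := by
        rw [Real.norm_eq_abs, abs_of_nonneg (div_nonneg hnonneg hNα.le)]
    _ ≤ (atomterm N + maxterm N + ε' / 4 + farterm N) := by
        rw [div_le_iff₀ hNα]
        have hc1 : ∑ x ∈ D, S.num N x
            = ∑ x ∈ (D.filter Pnz).filter NM, S.num N x
              + (∑ x ∈ ((D.filter Pnz).filter (fun x => ¬ NM x)).filter NS, S.num N x
                + ∑ x ∈ ((D.filter Pnz).filter (fun x => ¬ NM x)).filter (fun x => ¬ NS x),
                    S.num N x)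
              + ∑ x ∈ D.filter (fun x => ¬ Pnz x), S.num N x := by
          rw [hsplit3, hsplit2, hsplit1]
        rw [hc1]
        have := add_le_add (add_le_add hmaxsum (add_le_add hsmallsum hfarsum)) hatoms
        apply le_trans this
        apply le_of_eq
        ring
    _ < ε' := by linarith

end BDSetup

/-- Formula (5.2): with `ℓ_N → ∞`, `ℓ_N/N → 0`, and
`ℰ^i_N = E_N ∩ [b_i − ℓ_N/N, b_i + ℓ_N/N]`, `Δ_N = E_N ∖ ∪_i ℰ^i_N`, one has
`ν_N(Δ_N) → 0` and `ν_N(ℰ^i_N) → m(b_i)/Σ_j m(b_j)` for every `1 ≤ i ≤ κ`. -/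
theorem stmt13 (S : BDSetup) (κ : ℕ) (β : ℕ → ℕ) (hβ : S.BEnum κ β)
    (ℓ : ℕ → ℕ) (hℓ_pos : ∀ N, 0 < ℓ N)
    (hℓ_inf : Tendsto (fun N => (ℓ N : ℝ)) atTop atTop)
    (hℓ_o : Tendsto (fun N => (ℓ N : ℝ) / N) atTop (𝓝 0)) :
    Tendsto
      (fun N => ∑ x ∈ S.E N \ (Finset.Icc 1 κ).biUnion (fun i => S.metaSet β ℓ N i), S.ν N x)
      atTop (𝓝 0)
    ∧ ∀ i ∈ Finset.Icc 1 κ,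
        Tendsto (fun N => ∑ x ∈ S.metaSet β ℓ N i, S.ν N x) atTop
          (𝓝 (S.mb (β i) / ∑ j ∈ Finset.Icc 1 κ, S.mb (β j))) := by
  obtain ⟨ε, hε0, hε1, hV, hgap⟩ := S.exists_eps
  have hP0 : (0:ℝ) ≤ ∑' k : ℕ, ((k : ℝ) + 1) ^ (-S.α) := tsum_nonneg (fun k => by positivity)
  have hmb1 : ∀ j, (1:ℝ) ≤ S.mb j := by
    intro j
    rw [BDSetup.mb]
    have h2 : (0:ℝ) ≤ (if S.z j = S.a ∨ S.z j = S.b then (1:ℝ) else 2) := by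
      split <;> norm_num
    nlinarith [hP0]
  have hκ1 : 1 ≤ κ := le_trans one_le_two hβ.two_le
  have hTpos : 0 < ∑ j ∈ Finset.Icc 1 κ, S.mb (β j) := by
    apply Finset.sum_pos
    · intro j _
      exact lt_of_lt_of_le one_pos (hmb1 _)
    · exact ⟨1, Finset.mem_Icc.mpr ⟨le_rfl, hκ1⟩⟩
  have hfacts : ∀ i ∈ Finset.Icc 1 κ, 1 ≤ β i ∧ β i ≤ S.m ∧ S.αv (β i) = S.α := by
    intro i hi
    obtain ⟨hmem, hα⟩ := hβ.mem i hi
    obtain ⟨h1, h2⟩ := Finset.mem_Icc.mp hmem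
    exact ⟨h1, h2, hα⟩
  have hA : ∀ i ∈ Finset.Icc 1 κ, Tendsto
      (fun N => (∑ x ∈ S.metaSet β ℓ N i, S.num N x) / (N : ℝ) ^ S.α) atTop
      (𝓝 (S.mb (β i))) := by
    intro i hi
    obtain ⟨h1, h2, h3⟩ := hfacts i hi
    exact S.metaSum_tendsto hε0 hV hgap β ℓ i h1 h2 h3 hℓ_inf hℓ_o
  have hD := S.deltaSum_tendsto hε0 hV hgap κ β hβ ℓ hℓ_inf hℓ_o
  have hdisjev : ∀ᶠ N : ℕ in atTop, ((Finset.Icc 1 κ : Finset ℕ) : Set ℕ).PairwiseDisjoint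
      (fun i => S.metaSet β ℓ N i) := by
    filter_upwards [BDSetup.ev_ratio_le ℓ hℓ_o hε0] with N hεN
    intro i hi i' hi' hne
    simp only [Finset.mem_coe] at hi hi'
    obtain ⟨hi1, hiκ⟩ := Finset.mem_Icc.mp hi
    obtain ⟨hi'1, hi'κ⟩ := Finset.mem_Icc.mp hi'
    obtain ⟨h1, h2, _⟩ := hfacts i hi
    obtain ⟨h1', h2', _⟩ := hfacts i' hi'
    apply Finset.disjoint_left.mpr
    intro x hx hx'
    simp only [BDSetup.metaSet, Finset.mem_filter] at hx hx'
    obtain ⟨-, hxa, hxb⟩ := hx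
    obtain ⟨-, hxa', hxb'⟩ := hx'
    rcases Nat.lt_or_ge i i' with hlt | hge
    · have hβlt := hβ.mono i i' hi1 hlt hi'κ
      have := S.z_sep hgap h1 hβlt h2'
      linarith
    · have hlt : i' < i := by omega
      have hβlt := hβ.mono i' i hi'1 hlt hiκ
      have := S.z_sep hgap h1' hβlt h2
      linarith
  have hZten : Tendsto (fun N => S.Z N / (N : ℝ) ^ S.α) atTop
      (𝓝 (∑ j ∈ Finset.Icc 1 κ, S.mb (β j))) := by
    have hATten : Tendsto (fun N => ∑ i ∈ Finset.Icc 1 κ,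
        (∑ x ∈ S.metaSet β ℓ N i, S.num N x) / (N : ℝ) ^ S.α) atTop
        (𝓝 (∑ j ∈ Finset.Icc 1 κ, S.mb (β j))) := tendsto_finset_sum _ hA
    have hsum := hATten.add hD
    rw [add_zero] at hsum
    apply Tendsto.congr' _ hsum
    filter_upwards [hdisjev] with N hdis
    have hsub : (Finset.Icc 1 κ).biUnion (fun i => S.metaSet β ℓ N i) ⊆ S.E N :=
      Finset.biUnion_subset.mpr (fun i _ => S.meta_subset_E β ℓ N i)
    have hsdiff := Finset.sum_sdiff (f := S.num N) hsub
    have hbi := Finset.sum_biUnion (f := S.num N) hdis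
    rw [← Finset.sum_div, ← add_div, ← S.sum_num_eq_Z N, ← hsdiff, hbi, add_comm]
  constructor
  · have hdiv := hD.div hZten hTpos.ne'
    rw [zero_div] at hdiv
    apply Tendsto.congr' _ hdiv
    filter_upwards [Filter.eventually_ge_atTop 1] with N hN
    have hZ0 : S.Z N ≠ 0 := (S.Z_pos N hN).ne'
    have hNα : ((N:ℝ) ^ S.α) ≠ 0 :=
      (Real.rpow_pos_of_pos (BDSetup.div_cast_pos hN) _).ne'
    rw [S.sum_ν_eq N]
    rw [Pi.div_apply]
    field_simp
  · intro i hi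
    have hdiv := (hA i hi).div hZten hTpos.ne'
    apply Tendsto.congr' _ hdiv
    filter_upwards [Filter.eventually_ge_atTop 1] with N hN
    have hZ0 : S.Z N ≠ 0 := (S.Z_pos N hN).ne'
    have hNα : ((N:ℝ) ^ S.α) ≠ 0 :=
      (Real.rpow_pos_of_pos (BDSetup.div_cast_pos hN) _).ne'
    rw [S.sum_ν_eq N]
    rw [Pi.div_apply]
    field_simp
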